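/- arXiv:1005.3486 — 6 statements merged into one kernel-verified Lean document; each statement's English description precedes it below -/
import Mathlib

section
/- Let C be a binary linear code with parity-check matrix H. Then w_maxfrac^min(H) ≤ w_AWGNC^min(H) ≤ w_BEC^min(H) and w_maxfrac^min(H) ≤ w_BSC^min(H) ≤ w_BEC^min(H). -/
open Matrix BigOperators Finset

section Defs

variable {J I : Type*} [Fintype J] [Fintype I] [DecidableEq I]

/-- The support of row `j` of a binary matrix `H`. -/
def rowSupp (H : Matrix J I (ZMod 2)) (j : J) : Finset I :=
  Finset.univ.filter fun i => H j i = 1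

/-- The fundamental cone of a binary matrix `H`. -/
def fundCone (H : Matrix J I (ZMod 2)) : Set (I → ℝ) :=
  {x | (∀ i, 0 ≤ x i) ∧
    ∀ j : J, ∀ ℓ ∈ rowSupp H j, x ℓ ≤ ∑ i ∈ (rowSupp H j).erase ℓ, x i}

/-- BEC pseudoweight: size of the support. -/
noncomputable def wBEC (x : I → ℝ) : ℝ := ({i | x i ≠ 0}.ncard : ℝ)

/-- AWGNC pseudoweight. -/
noncomputable def wAWGNC (x : I → ℝ) : ℝ := (∑ i, x i) ^ 2 / ∑ i, x i ^ 2

/-- Max-fractional weight. -/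
noncomputable def wMaxFrac (x : I → ℝ) : ℝ := (∑ i, x i) / sSup (Set.range x)

/-- `H` is a parity-check matrix of the code `C`. -/
def IsParityCheck (H : Matrix J I (ZMod 2)) (C : Submodule (ZMod 2) (I → ZMod 2)) : Prop :=
  ∀ c, c ∈ C ↔ H.mulVec c = 0

/-- Minimum Hamming distance of a code. -/
noncomputable def minDist (C : Submodule (ZMod 2) (I → ZMod 2)) : ℕ :=
  sInf {d | ∃ c ∈ C, c ≠ 0 ∧ hammingNorm c = d}

/-- Minimum pseudoweight of `H` w.r.t. pseudoweight function `w`: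
the infimum of `w` over all nonzero pseudocodewords (`⊤` if there are none). -/
noncomputable def minPW (w : (I → ℝ) → ℝ) (H : Matrix J I (ZMod 2)) : EReal :=
  sInf ((fun x => (w x : EReal)) '' (fundCone H \ {0}))

/-- The chain (connectivity) relation associated with a binary matrix whose rows
have weight 2: `i` and `i'` are related iff they are equal or joined by a chain of rows
whose supports are exactly consecutive pairs. -/
def chainRel (H : Matrix J I (ZMod 2)) (i i' : I) : Prop :=
  i = i' ∨ ∃ ℓ : ℕ, 1 ≤ ℓ ∧ ∃ (c : Fin (ℓ + 1) → I) (r : Fin ℓ → J),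
    c 0 = i ∧ c (Fin.last ℓ) = i' ∧
    ∀ t : Fin ℓ, rowSupp H (r t) = {c t.castSucc, c t.succ}

/-- The 0-1 real matrix associated with a binary matrix. -/
def toRealMatrix (H : Matrix J I (ZMod 2)) : Matrix J I ℝ :=
  Matrix.of fun j i => if H j i = 1 then (1 : ℝ) else 0

/-- The Tanner graph of a binary matrix. -/
def tannerGraph (H : Matrix J I (ZMod 2)) : SimpleGraph (J ⊕ I) :=
  SimpleGraph.fromRel fun u v => ∃ j i, u = Sum.inl j ∧ v = Sum.inr i ∧ H j i = 1

end Defs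

/-- The multiset of (real) eigenvalues, with multiplicity, of a real square matrix:
the real roots of its characteristic polynomial. -/
noncomputable def eigMult {ι : Type*} [Fintype ι] [DecidableEq ι] (A : Matrix ι ι ℝ) :
    Multiset ℝ :=
  A.charpoly.roots

section FinDefs

variable {n : ℕ}

/-- The non-increasing rearrangement of a real vector. -/
noncomputable def sortDesc (x : Fin n → ℝ) : Fin n → ℝ :=
  fun i => x (Tuple.sort (fun j => -x j) i)

/-- `Φ(ξ) = ∫₀^ξ φ`, where `φ(ξ) = x'_i` for `i - 1 < ξ ≤ i` and `x'` is the
non-increasing rearrangement of `x`. -/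
noncomputable def bigPhi (x : Fin n → ℝ) (ξ : ℝ) : ℝ :=
  ∑ i : Fin n, sortDesc x i * min 1 (max 0 (ξ - (i : ℝ)))

/-- BSC pseudoweight: `2 Φ⁻¹(Φ(n)/2)`. -/
noncomputable def wBSC (x : Fin n → ℝ) : ℝ :=
  2 * sInf {ξ : ℝ | bigPhi x (n : ℝ) / 2 ≤ bigPhi x ξ}

/-- The pseudocodeword redundancy of a code `C` w.r.t. the pseudoweight function `w`:
the smallest number of rows of a parity-check matrix `H` of `C` whose minimum
pseudoweight equals the minimum distance of `C` (`⊤` if there is no such matrix). -/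
noncomputable def pcRedundancy (w : (Fin n → ℝ) → ℝ)
    (C : Submodule (ZMod 2) (Fin n → ZMod 2)) : ℕ∞ :=
  sInf {k : ℕ∞ | ∃ (m : ℕ) (H : Matrix (Fin m) (Fin n) (ZMod 2)),
    k = (m : ℕ∞) ∧ IsParityCheck H C ∧ minPW w H = ((minDist C : ℝ) : EReal)}

end FinDefs

/-!
All four inequalities hold pointwise on nonzero vectors of the fundamental cone, indeed on all
nonzero nonnegative vectors `x` with sum `S`, maximum `M` and support size `e`. The AWGNC chain
is `S / M ≤ S² / ‖x‖² ≤ e`: the first step is `‖x‖² ≤ M S`, the second is Cauchy–Schwarz on the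
support. For the BSC weight, `Φ` grows at rate at most `M` from `Φ 0 = 0` to `Φ n = S`, so
`Φ ξ ≥ S / 2` forces `ξ ≥ S / (2M)`; conversely the sorted vector is supported on its first `e`
entries, and Chebyshev's sum inequality gives `Φ (e / 2) ≥ S / 2` (the concavity of `Φ`).
-/

lemma minPW_mono {J I : Type*} [Fintype J] [Fintype I] [DecidableEq I]
    {w₁ w₂ : (I → ℝ) → ℝ} (H : Matrix J I (ZMod 2))
    (h : ∀ x ∈ fundCone H \ {0}, w₁ x ≤ w₂ x) : minPW w₁ H ≤ minPW w₂ H := by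
  apply le_sInf
  rintro b ⟨x, hx, rfl⟩
  exact le_trans (sInf_le ⟨x, hx, rfl⟩) (EReal.coe_le_coe_iff.mpr (h x hx))

section Pointwise

variable {I : Type*} [Fintype I] {x : I → ℝ}

lemma wBEC_eq_card [DecidableEq I] (x : I → ℝ) :
    wBEC x = ((univ.filter fun i => x i ≠ 0).card : ℝ) := by
  rw [wBEC, ← Set.ncard_coe_finset]
  congr
  ext i
  simp

lemma le_sSup_range (x : I → ℝ) (i : I) : x i ≤ sSup (Set.range x) :=
  le_ciSup (Set.finite_range x).bddAbove i

lemma sSup_range_pos (hx : 0 < x) : 0 < sSup (Set.range x) := by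
  obtain ⟨i, hi⟩ := (Pi.lt_def.1 hx).2
  exact hi.trans_le (le_sSup_range x i)

lemma sum_sq_le_sSup_range_mul_sum (hx : 0 ≤ x) :
    ∑ i, x i ^ 2 ≤ sSup (Set.range x) * ∑ i, x i := by
  rw [mul_sum]
  exact sum_le_sum fun i _ => by
    rw [sq]; exact mul_le_mul_of_nonneg_right (le_sSup_range x i) (hx i)

lemma wMaxFrac_le_wAWGNC (hx : 0 < x) : wMaxFrac x ≤ wAWGNC x := by
  have hS : 0 < ∑ i, x i := Fintype.sum_pos hx
  have hQ : 0 < ∑ i, x i ^ 2 := by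
    obtain ⟨i, hi⟩ := (Pi.lt_def.1 hx).2
    exact sum_pos' (fun i _ => sq_nonneg _) ⟨i, mem_univ i, pow_pos hi 2⟩
  rw [wMaxFrac, wAWGNC, div_le_div_iff₀ (sSup_range_pos hx) hQ]
  calc (∑ i, x i) * ∑ i, x i ^ 2
      ≤ (∑ i, x i) * (sSup (Set.range x) * ∑ i, x i) :=
        mul_le_mul_of_nonneg_left (sum_sq_le_sSup_range_mul_sum hx.le) hS.le
    _ = (∑ i, x i) ^ 2 * sSup (Set.range x) := by ring

lemma wAWGNC_le_wBEC [DecidableEq I] (x : I → ℝ) : wAWGNC x ≤ wBEC x := by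
  set s := univ.filter fun i => x i ≠ 0
  have hsum : ∑ i ∈ s, x i = ∑ i, x i := sum_filter_of_ne fun _ _ => id
  have hsum_sq : ∑ i ∈ s, x i ^ 2 = ∑ i, x i ^ 2 :=
    sum_filter_of_ne fun _ _ hi h => hi (by simp [h])
  rw [wAWGNC, wBEC_eq_card]
  refine div_le_of_le_mul₀ (sum_nonneg fun i _ => sq_nonneg _) (Nat.cast_nonneg _) ?_
  have cauchySchwarz := sq_sum_le_card_mul_sum_sq (s := s) (f := x)
  rwa [hsum, hsum_sq] at cauchySchwarz

end Pointwise

noncomputable def clampUnit (t : ℝ) : ℝ := min 1 (max 0 t)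

lemma clampUnit_nonneg (t : ℝ) : 0 ≤ clampUnit t := le_min zero_le_one (le_max_left _ _)

lemma clampUnit_mono : Monotone clampUnit :=
  fun _ _ h => min_le_min le_rfl (max_le_max le_rfl h)

lemma clampUnit_of_one_le {t : ℝ} (h : 1 ≤ t) : clampUnit t = 1 := by
  rw [clampUnit, max_eq_right (zero_le_one.trans h), min_eq_left h]

lemma clampUnit_of_nonpos {t : ℝ} (h : t ≤ 0) : clampUnit t = 0 := by
  rw [clampUnit, max_eq_left h, min_eq_right zero_le_one]

lemma clampUnit_eq_sub (t : ℝ) : clampUnit t = max 0 t - max 0 (t - 1) := by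
  unfold clampUnit; simp only [min_def, max_def]; split_ifs <;> linarith

lemma sum_range_clampUnit (m : ℕ) (ξ : ℝ) :
    ∑ i ∈ range m, clampUnit (ξ - i) = max 0 ξ - max 0 (ξ - m) := by
  have telescope := sum_range_sub' (fun i : ℕ => max 0 (ξ - i)) m
  simp only [Nat.cast_add, Nat.cast_one, Nat.cast_zero, sub_zero, ← sub_sub] at telescope
  simpa only [clampUnit_eq_sub] using telescope

section Sorted

variable {n : ℕ} (x : Fin n → ℝ)

lemma sortDesc_antitone : Antitone (sortDesc x) :=
  fun _ _ hij => by simpa [sortDesc] using Tuple.monotone_sort (fun j => -x j) hij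

lemma sum_sortDesc : ∑ i, sortDesc x i = ∑ i, x i :=
  Equiv.sum_comp (Tuple.sort (fun j => -x j)) x

lemma sortDesc_eq_zero_of_card_le {x : Fin n → ℝ} (hx : 0 ≤ x) {i : Fin n}
    (hi : (univ.filter fun j => x j ≠ 0).card ≤ i) : sortDesc x i = 0 := by
  by_contra hne
  have hpos : 0 < sortDesc x i := (hx _).lt_of_ne' hne
  -- the sorting permutation maps `Iic i` injectively into the support of `x`
  have hcard := card_le_card_of_injOn (Tuple.sort (fun j => -x j))
    (s := Iic i) (t := univ.filter fun j => x j ≠ 0)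
    (fun j hj => by
      simp only [coe_filter, mem_univ, true_and, Set.mem_ofPred_eq]
      exact (hpos.trans_le (sortDesc_antitone x (mem_Iic.1 hj))).ne')
    (Tuple.sort _).injective.injOn
  rw [Fin.card_Iic] at hcard
  omega

lemma bigPhi_eq (ξ : ℝ) : bigPhi x ξ = ∑ i, sortDesc x i * clampUnit (ξ - i) := rfl

lemma bigPhi_natCast_self : bigPhi x n = ∑ i, x i := by
  rw [bigPhi_eq, ← sum_sortDesc x]
  refine sum_congr rfl fun i _ => ?_
  rw [clampUnit_of_one_le, mul_one]
  have : (i : ℝ) + 1 ≤ n := by exact_mod_cast i.isLt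
  linarith

lemma bigPhi_of_nonpos {ξ : ℝ} (hξ : ξ ≤ 0) : bigPhi x ξ = 0 := by
  rw [bigPhi_eq]
  refine sum_eq_zero fun i _ => ?_
  rw [clampUnit_of_nonpos (by linarith [(Nat.cast_nonneg i : (0 : ℝ) ≤ (i : ℕ))]), mul_zero]

lemma bigPhi_le_mul_max {M : ℝ} (hM : ∀ i, x i ≤ M) (hM₀ : 0 ≤ M) (ξ : ℝ) :
    bigPhi x ξ ≤ M * max 0 ξ := by
  calc bigPhi x ξ ≤ ∑ i : Fin n, M * clampUnit (ξ - i) :=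
        sum_le_sum fun i _ => mul_le_mul_of_nonneg_right (hM _) (clampUnit_nonneg _)
    _ = M * (max 0 ξ - max 0 (ξ - n)) := by
        rw [← mul_sum, Fin.sum_univ_eq_sum_range (fun i => clampUnit (ξ - i)), sum_range_clampUnit]
    _ ≤ M * max 0 ξ := mul_le_mul_of_nonneg_left (sub_le_self _ (le_max_left _ _)) hM₀

lemma sum_le_two_mul_bigPhi {x : Fin n → ℝ} (hx : 0 < x) :
    ∑ i, x i ≤ 2 * bigPhi x ((univ.filter fun j => x j ≠ 0).card / 2) := by
  set e := (univ.filter fun j => x j ≠ 0).card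
  set c : Fin n → ℝ := fun i => clampUnit (e / 2 - i)
  set s := univ.filter fun i : Fin n => (i : ℕ) < e
  have he : e ≤ n := (card_filter_le _ _).trans (by simp)
  have hc_anti : Antitone c := fun i j hij =>
    clampUnit_mono (sub_le_sub_left (by exact_mod_cast hij) _)
  have hsum_x : ∑ i ∈ s, sortDesc x i = ∑ i, x i := by
    rw [sum_filter_of_ne fun i _ hi => not_le.1 (mt (sortDesc_eq_zero_of_card_le hx.le) hi),
      sum_sortDesc]
  have hsum_c : ∑ i ∈ s, c i = e / 2 := by
    rw [sum_filter_of_ne fun i _ hi => ?_]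
    · rw [Fin.sum_univ_eq_sum_range (fun i => clampUnit (e / 2 - i)), sum_range_clampUnit,
        max_eq_right (by positivity), max_eq_left (by linarith [(Nat.cast_le (α := ℝ)).2 he]),
        sub_zero]
    · by_contra hie
      have : (e : ℝ) ≤ i := by exact_mod_cast not_lt.1 hie
      exact hi (clampUnit_of_nonpos (by linarith [(Nat.cast_nonneg e : (0 : ℝ) ≤ e)]))
  have hcard : (s.card : ℝ) = e := by
    rw [Fin.card_filter_val_lt, min_eq_right he]
  have chebyshev := ((sortDesc_antitone x).monovary hc_anti).monovaryOn s
    |>.sum_mul_sum_le_card_mul_sum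
  rw [hsum_x, hsum_c, hcard] at chebyshev
  have hrestrict : ∑ i ∈ s, sortDesc x i * c i ≤ bigPhi x (e / 2) :=
    sum_le_sum_of_subset_of_nonneg (subset_univ s) fun i _ _ =>
      mul_nonneg (hx.le _) (clampUnit_nonneg _)
  obtain ⟨i₀, hi₀⟩ := (Pi.lt_def.1 hx).2
  have he₀ : (0 : ℝ) < e := by
    exact_mod_cast card_pos.2 ⟨i₀, mem_filter.2 ⟨mem_univ _, hi₀.ne'⟩⟩
  nlinarith

end Sorted

section BSC

variable {n : ℕ} {x : Fin n → ℝ}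

def bscLevelSet (x : Fin n → ℝ) : Set ℝ := {ξ | bigPhi x n / 2 ≤ bigPhi x ξ}

lemma mem_bscLevelSet {ξ : ℝ} : ξ ∈ bscLevelSet x ↔ (∑ i, x i) / 2 ≤ bigPhi x ξ := by
  rw [bscLevelSet, Set.mem_ofPred_eq, bigPhi_natCast_self]

lemma wBSC_eq : wBSC x = 2 * sInf (bscLevelSet x) := rfl

lemma wMaxFrac_le_wBSC (hx : 0 < x) : wMaxFrac x ≤ wBSC x := by
  set S := ∑ i, x i
  set M := sSup (Set.range x)
  have hS : 0 < S := Fintype.sum_pos hx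
  have hM : 0 < M := sSup_range_pos hx
  have hlower : ∀ ξ ∈ bscLevelSet x, S / (2 * M) ≤ ξ := by
    intro ξ hξ
    have h := (mem_bscLevelSet.1 hξ).trans (bigPhi_le_mul_max x (le_sSup_range x) hM.le ξ)
    rcases le_or_gt ξ 0 with hξ0 | hξ0
    · rw [max_eq_left hξ0] at h; linarith
    · rw [max_eq_right hξ0.le] at h
      rw [div_le_iff₀ (by positivity)]
      linarith
  have hne : (n : ℝ) ∈ bscLevelSet x := by
    rw [mem_bscLevelSet, bigPhi_natCast_self]; linarith
  calc wMaxFrac x = 2 * (S / (2 * M)) := by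
        rw [mul_div_assoc', mul_div_mul_left _ _ two_ne_zero]; rfl
    _ ≤ wBSC x := by rw [wBSC_eq]; gcongr; exact le_csInf ⟨_, hne⟩ hlower

lemma wBSC_le_wBEC (hx : 0 < x) : wBSC x ≤ wBEC x := by
  have hS : 0 < ∑ i, x i := Fintype.sum_pos hx
  have hbdd : BddBelow (bscLevelSet x) := by
    refine ⟨0, fun ξ hξ => le_of_not_gt fun hξ0 => ?_⟩
    have h := mem_bscLevelSet.1 hξ
    rw [bigPhi_of_nonpos x hξ0.le] at h
    linarith
  have hmem : ((univ.filter fun j => x j ≠ 0).card / 2 : ℝ) ∈ bscLevelSet x := by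
    rw [mem_bscLevelSet]
    linarith [sum_le_two_mul_bigPhi hx]
  rw [wBSC_eq, wBEC_eq_card]
  linarith [csInf_le hbdd hmem]

end BSC

theorem statement0_general {m n : ℕ}
    (H : Matrix (Fin m) (Fin n) (ZMod 2)) :
    minPW wMaxFrac H ≤ minPW wAWGNC H ∧ minPW wAWGNC H ≤ minPW wBEC H ∧
    minPW wMaxFrac H ≤ minPW wBSC H ∧ minPW wBSC H ≤ minPW wBEC H := by
  have pos : ∀ x ∈ fundCone H \ {0}, 0 < x := fun x hx =>
    lt_of_le_of_ne hx.1.1 (Ne.symm hx.2)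
  exact ⟨minPW_mono H fun x hx => wMaxFrac_le_wAWGNC (pos x hx),
    minPW_mono H fun x _ => wAWGNC_le_wBEC x,
    minPW_mono H fun x hx => wMaxFrac_le_wBSC (pos x hx),
    minPW_mono H fun x hx => wBSC_le_wBEC (pos x hx)⟩

/-- For a binary linear code `C` with parity-check matrix `H`,
`w_maxfrac^min(H) ≤ w_AWGNC^min(H) ≤ w_BEC^min(H)` and
`w_maxfrac^min(H) ≤ w_BSC^min(H) ≤ w_BEC^min(H)`. -/
theorem statement0 {m n : ℕ} (C : Submodule (ZMod 2) (Fin n → ZMod 2))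
    (H : Matrix (Fin m) (Fin n) (ZMod 2)) (hH : IsParityCheck H C) :
    minPW wMaxFrac H ≤ minPW wAWGNC H ∧ minPW wAWGNC H ≤ minPW wBEC H ∧
    minPW wMaxFrac H ≤ minPW wBSC H ∧ minPW wBSC H ≤ minPW wBEC H :=
  statement0_general H
end

section
/- Let H ∈ 𝔽₂^{m×n} be a matrix in which every row has Hamming weight exactly 2, and let R be the associated equivalence relation on the column index set I. Then a vector x ∈ ℝⁿ with nonnegative coordinates belongs to the fundamental cone K(H) if and only if x_i = x_{i'} for all (i,i') ∈ R, i.e., x has equal coordinates within each equivalence class of R. -/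
open Matrix BigOperators Finset

/-- If every row of `H` has Hamming weight exactly 2 and `R` is the associated
chain equivalence relation on column indices, then a vector with nonnegative coordinates is
in the fundamental cone `K(H)` iff it has equal coordinates within each equivalence class. -/
theorem statement4 {m n : ℕ} (H : Matrix (Fin m) (Fin n) (ZMod 2))
    (hrows : ∀ j, (rowSupp H j).card = 2) (x : Fin n → ℝ) (hx : ∀ i, 0 ≤ x i) :
    x ∈ fundCone H ↔ ∀ i i', chainRel H i i' → x i = x i' := by
  constructor
  · rintro ⟨-, hE⟩ i i' hR
    -- per-row equality
    have key : ∀ j a b, rowSupp H j = {a, b} → x a = x b := by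
      intro j a b hs
      have hab : a ≠ b := by
        intro h
        have := hrows j
        rw [hs, h] at this
        simp at this
      have h1 := hE j a (by rw [hs]; simp)
      have h2 := hE j b (by rw [hs]; simp)
      rw [hs] at h1 h2
      rw [show ({a, b} : Finset (Fin n)).erase a = {b} by
        rw [Finset.erase_insert (by simpa using hab)]] at h1
      rw [show ({a, b} : Finset (Fin n)).erase b = {a} by
        rw [Finset.pair_comm, Finset.erase_insert (by simpa using hab.symm)]] at h2
      simp at h1 h2
      linarith
    rcases hR with rfl | ⟨ℓ, -, c, r, hc0, hcl, hrow⟩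
    · rfl
    · have main : ∀ t : Fin (ℓ + 1), x (c 0) = x (c t) := by
        intro t
        induction t using Fin.induction with
        | zero => rfl
        | succ i ih => exact ih.trans (key (r i) _ _ (hrow i))
      rw [← hc0, ← hcl]; exact main _
  · intro hR
    refine ⟨hx, fun j ℓ hℓ => ?_⟩
    obtain ⟨a, b, hab, hs⟩ := Finset.card_eq_two.mp (hrows j)
    rw [hs] at hℓ
    simp at hℓ
    obtain ⟨b', hsupp, herase⟩ : ∃ b', rowSupp H j = {ℓ, b'} ∧ (rowSupp H j).erase ℓ = {b'} := by
      rcases hℓ with rfl | rfl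
      · exact ⟨b, hs, by rw [hs, Finset.erase_insert (by simpa using hab)]⟩
      · exact ⟨a, by rw [hs, Finset.pair_comm], by rw [hs, Finset.pair_comm,
          Finset.erase_insert (by simpa using hab.symm)]⟩
    have hchain : chainRel H ℓ b' := by
      refine Or.inr ⟨1, le_refl 1, ![ℓ, b'], ![j], rfl, rfl, ?_⟩
      intro t
      fin_cases t
      simpa using hsupp
    rw [herase, Finset.sum_singleton, hR ℓ b' hchain]
end

section
/- Let H ∈ 𝔽₂^{m×n} be a parity-check matrix of a binary linear code C such that every row of H has Hamming weight exactly 2, and let R be the associated equivalence relation on the column index set I. Then the minimum Hamming distance of C equals the minimum cardinality of an equivalence class of R: d(C) = min_{S ∈ 𝒮} |S|, where 𝒮 is the set of equivalence classes of R. -/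
open Matrix BigOperators Finset

/-!
A check of weight 2 on coordinates `a, b` says exactly `c a = c b`, so every codeword is constant
on each chain class, and the support of a nonzero codeword contains a whole class. Conversely,
the indicator of a class meets every row support in zero or two positions, hence is a codeword
of weight equal to the size of the class.
-/

theorem Nat.sInf_eq_sInf_of_forall_exists_le {A B : Set ℕ}
    (hAB : ∀ a ∈ A, ∃ b ∈ B, b ≤ a) (hBA : ∀ b ∈ B, ∃ a ∈ A, a ≤ b) : sInf A = sInf B := by
  have key : ∀ {A B : Set ℕ}, (∀ a ∈ A, ∃ b ∈ B, b ≤ a) → (∀ b ∈ B, ∃ a ∈ A, a ≤ b) →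
      sInf B ≤ sInf A := by
    intro A B hAB hBA
    rcases A.eq_empty_or_nonempty with rfl | hA
    · have hB : B = ∅ := Set.eq_empty_of_forall_notMem fun b hb => by simpa using hBA b hb
      simp [hB]
    · obtain ⟨b, hb, hba⟩ := hAB _ (Nat.sInf_mem hA)
      exact (Nat.sInf_le hb).trans hba
  exact le_antisymm (key hBA hAB) (key hAB hBA)

section

variable {J I : Type*} [Fintype I]

theorem hammingNorm_eq_ncard {β : Type*} [Zero β] [DecidableEq β] (x : I → β) :
    hammingNorm x = {i | x i ≠ 0}.ncard := by
  rw [hammingNorm, ← Set.ncard_coe_finset, Finset.coe_filter]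
  simp only [Finset.mem_univ, true_and]

theorem hammingNorm_indicator_one {β : Type*} [Zero β] [One β] [NeZero (1 : β)]
    [DecidableEq β] (s : Set I) : hammingNorm (s.indicator (1 : I → β)) = s.ncard := by
  classical
  rw [hammingNorm_eq_ncard]
  congr 1
  ext i
  by_cases hi : i ∈ s <;> simp [hi]

theorem mulVec_apply_eq_sum_rowSupp (H : Matrix J I (ZMod 2)) (c : I → ZMod 2) (j : J) :
    (H *ᵥ c) j = ∑ i ∈ rowSupp H j, c i := by
  rw [mulVec, dotProduct, rowSupp, Finset.sum_filter]
  refine Finset.sum_congr rfl fun i _ => ?_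
  have : ∀ x : ZMod 2, x = 0 ∨ x = 1 := by decide
  rcases this (H j i) with h | h <;> simp [h]

variable [DecidableEq I]

def RowAdj (H : Matrix J I (ZMod 2)) (a b : I) : Prop :=
  ∃ j, rowSupp H j = {a, b}

theorem RowAdj.symm {H : Matrix J I (ZMod 2)} {a b : I} (h : RowAdj H a b) :
    RowAdj H b a := by
  obtain ⟨j, hj⟩ := h
  exact ⟨j, by rw [hj, Finset.pair_comm]⟩

theorem chainRel_iff_reflTransGen (H : Matrix J I (ZMod 2)) (i i' : I) :
    chainRel H i i' ↔ Relation.ReflTransGen (RowAdj H) i i' := by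
  constructor
  · rintro (rfl | ⟨ℓ, -, c, r, rfl, rfl, hrow⟩)
    · exact .refl
    · have key : ∀ t : Fin (ℓ + 1), Relation.ReflTransGen (RowAdj H) (c 0) (c t) := by
        intro t
        induction t using Fin.induction with
        | zero => exact .refl
        | succ s ih => exact ih.tail ⟨r s, hrow s⟩
      exact key (Fin.last ℓ)
  · intro h
    induction h with
    | refl => exact Or.inl rfl
    | @tail b d _ hbd ih =>
      obtain ⟨j, hj⟩ := hbd
      rcases ih with rfl | ⟨ℓ, -, c, r, h0, hlast, hrow⟩
      · refine Or.inr ⟨1, le_rfl, ![i, d], ![j], rfl, rfl, fun t => ?_⟩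
        fin_cases t
        simpa using hj
      · refine Or.inr ⟨ℓ + 1, by omega, Fin.snoc c d, Fin.snoc r j, ?_, by simp, fun t => ?_⟩
        · rwa [← Fin.castSucc_zero, Fin.snoc_castSucc]
        · induction t using Fin.lastCases with
          | last => simpa [hlast] using hj
          | cast s =>
            simp only [Fin.snoc_castSucc, Fin.succ_castSucc]
            simpa using hrow s

theorem chainRel_iff_of_rowAdj {H : Matrix J I (ZMod 2)} {i a b : I}
    (h : RowAdj H a b) : chainRel H i a ↔ chainRel H i b := by
  simp only [chainRel_iff_reflTransGen]
  exact ⟨fun hia => hia.tail h, fun hib => hib.tail h.symm⟩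

theorem apply_eq_of_chainRel {H : Matrix J I (ZMod 2)} {c : I → ZMod 2}
    (hc : H *ᵥ c = 0) {i i' : I} (h : chainRel H i i') : c i = c i' := by
  rw [chainRel_iff_reflTransGen] at h
  induction h with
  | refl => rfl
  | @tail b d _ hbd ih =>
    obtain ⟨j, hj⟩ := hbd
    have hrow := congrFun hc j
    rw [mulVec_apply_eq_sum_rowSupp, hj] at hrow
    rcases eq_or_ne b d with rfl | hne
    · exact ih
    · rw [Finset.sum_pair hne] at hrow
      exact ih.trans (CharTwo.add_eq_zero.mp hrow)

theorem mulVec_indicator_setOf_chainRel {H : Matrix J I (ZMod 2)}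
    (hrows : ∀ j, (rowSupp H j).card = 2) (i : I) :
    H *ᵥ {i' | chainRel H i i'}.indicator 1 = 0 := by
  classical
  funext j
  obtain ⟨a, b, hab, hj⟩ := Finset.card_eq_two.mp (hrows j)
  have hiff : chainRel H i a ↔ chainRel H i b := chainRel_iff_of_rowAdj ⟨j, hj⟩
  rw [mulVec_apply_eq_sum_rowSupp, hj, Finset.sum_pair hab, Pi.zero_apply, CharTwo.add_eq_zero]
  simp only [Set.indicator_apply, Set.mem_ofPred_eq, Pi.one_apply, hiff]

theorem ncard_setOf_chainRel_le_hammingNorm {H : Matrix J I (ZMod 2)} {c : I → ZMod 2}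
    (hc : H *ᵥ c = 0) {i : I} (hi : c i ≠ 0) :
    {i' | chainRel H i i'}.ncard ≤ hammingNorm c := by
  rw [hammingNorm_eq_ncard]
  refine Set.ncard_le_ncard (fun i' hi' => ?_) (Set.toFinite _)
  rwa [Set.mem_ofPred_eq, ← apply_eq_of_chainRel hc hi']

end

/-- If `H` is a parity-check matrix of the binary linear code `C` all of whose
rows have Hamming weight exactly 2, and `R` is the associated chain equivalence relation on
the column index set, then the minimum Hamming distance of `C` equals the minimum cardinality
of an equivalence class of `R`. -/
theorem statement6 {m n : ℕ} (C : Submodule (ZMod 2) (Fin n → ZMod 2))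
    (H : Matrix (Fin m) (Fin n) (ZMod 2)) (hH : IsParityCheck H C)
    (hrows : ∀ j, (rowSupp H j).card = 2) :
    minDist C = sInf {k : ℕ | ∃ i : Fin n, Set.ncard {i' | chainRel H i i'} = k} := by
  refine Nat.sInf_eq_sInf_of_forall_exists_le ?_ ?_
  · rintro _ ⟨c, hcC, hc0, rfl⟩
    obtain ⟨i, hi⟩ := Function.ne_iff.mp hc0
    exact ⟨_, ⟨i, rfl⟩, ncard_setOf_chainRel_le_hammingNorm ((hH c).mp hcC) hi⟩
  · rintro _ ⟨i, rfl⟩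
    have hi : i ∈ {i' | chainRel H i i'} := Or.inl rfl
    refine ⟨_, ⟨_, (hH _).mpr (mulVec_indicator_setOf_chainRel hrows i), ?_, rfl⟩,
      (hammingNorm_indicator_one _).le⟩
    exact fun h => by simpa [hi] using congrFun h i
end

section
/- Let H ∈ 𝔽₂^{m×n} be a parity-check matrix of a binary linear code C whose first m−1 rows all have Hamming weight exactly 2. Let Ĥ be the (m−1)×n matrix consisting of these rows, let R be the equivalence relation on the column index set I associated with Ĥ, and assume that the support I_m of the last row of H intersects each equivalence class of R in at most one element. Then d(C) = w_AWGNC^min(H) = w_BSC^min(H) = w_maxfrac^min(H). -/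
open Matrix BigOperators Finset

/-!
The rows of weight two force every pseudocodeword `x` in the fundamental cone to be constant
on the classes of `R`, and the indicator of any union of classes meeting the last row in an
even number of points is a codeword. If the class of a coordinate `p` misses the last row, it
is itself such a union, so `d(C) · x_p ≤ ∑ x`. Otherwise it meets the last row in a single
point `s`; the cone inequality of the last row at `s`, together with a smallest class `r`
among the other points of the row, gives `(|[s]| + |[r]|) · x_s ≤ ∑ x`, and `[s] ∪ [r]`
supports a codeword. Hence `d(C) ≤ ∑ x / max x`, which each of the three pseudoweights
dominates, while the indicator of a minimum-weight codeword lies in the cone and has all three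
pseudoweights at most `d(C)`.
-/

namespace ParityCheck

section General

variable {J I : Type*} [Fintype I]

def indicatorVec [DecidableEq I] (T : Finset I) : I → ℝ := fun i => if i ∈ T then 1 else 0

lemma mulVec_apply_eq_sum_rowSupp (H : Matrix J I (ZMod 2)) (c : I → ZMod 2) (j : J) :
    (H *ᵥ c) j = ∑ i ∈ rowSupp H j, c i := by
  rw [rowSupp, sum_filter]
  refine sum_congr rfl fun i _ => ?_
  have : H j i = 0 ∨ H j i = 1 := by generalize H j i = a; revert a; decide
  rcases this with h | h <;> simp [h]

lemma indicatorVec_support_mem_fundCone [DecidableEq I] {H : Matrix J I (ZMod 2)} {c : I → ZMod 2}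
    (hc : H *ᵥ c = 0) : indicatorVec {i | c i ≠ 0} ∈ fundCone H := by
  refine ⟨fun i => by unfold indicatorVec; split_ifs <;> norm_num, fun j ℓ hℓ => ?_⟩
  have hnonneg : ∀ i, 0 ≤ indicatorVec {i | c i ≠ 0} i := fun i => by
    unfold indicatorVec; split_ifs <;> norm_num
  by_cases hcℓ : c ℓ = 0
  · simpa [indicatorVec, hcℓ] using sum_nonneg fun i _ => hnonneg i
  have hrest : ∑ i ∈ (rowSupp H j).erase ℓ, c i ≠ 0 := by
    rw [sum_erase_eq_sub hℓ, ← mulVec_apply_eq_sum_rowSupp, hc]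
    simpa using hcℓ
  obtain ⟨i, hi, hci⟩ := exists_ne_zero_of_sum_ne_zero hrest
  calc indicatorVec {i | c i ≠ 0} ℓ = indicatorVec {i | c i ≠ 0} i := by
        simp [indicatorVec, hcℓ, hci]
    _ ≤ _ := single_le_sum (fun i _ => hnonneg i) hi

lemma exists_hammingNorm_eq_minDist {C : Submodule (ZMod 2) (I → ZMod 2)} (hC : C ≠ ⊥) :
    ∃ c ∈ C, c ≠ 0 ∧ hammingNorm c = minDist C := by
  obtain ⟨c, hcC, hc0⟩ := (Submodule.ne_bot_iff C).1 hC
  exact Nat.sInf_mem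
    (⟨_, c, hcC, hc0, rfl⟩ : {d | ∃ c ∈ C, c ≠ 0 ∧ hammingNorm c = d}.Nonempty)

lemma minDist_le_card_of_even_card_inter [DecidableEq I] {H : Matrix J I (ZMod 2)}
    {C : Submodule (ZMod 2) (I → ZMod 2)} (hH : IsParityCheck H C) {T : Finset I}
    (hT : ∀ j, Even #(rowSupp H j ∩ T)) (hne : T.Nonempty) : minDist C ≤ #T := by
  set c : I → ZMod 2 := fun i => if i ∈ T then 1 else 0
  have hcC : c ∈ C := by
    refine (hH c).2 (funext fun j => ?_)
    rw [mulVec_apply_eq_sum_rowSupp, sum_boole, filter_mem_eq_inter, Pi.zero_apply,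
      ZMod.natCast_eq_zero_iff_even]
    exact hT j
  have hsupp : ({i | c i ≠ 0} : Finset I) = T := by ext i; by_cases hi : i ∈ T <;> simp [c, hi]
  obtain ⟨t, ht⟩ := hne
  refine Nat.sInf_le ⟨c, hcC, fun h => ?_, by rw [hammingNorm, hsupp]⟩
  simpa [c, ht] using congrFun h t

lemma eq_of_rowSupp_eq_pair [DecidableEq I] {H : Matrix J I (ZMod 2)} {x : I → ℝ}
    (hx : x ∈ fundCone H) {j : J} {a b : I} (hj : rowSupp H j = {a, b}) : x a = x b := by
  by_cases hab : a = b
  · rw [hab]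
  have hab' := hx.2 j a (by simp [hj])
  have hba := hx.2 j b (by simp [hj])
  rw [hj, erase_insert (by simpa using hab), sum_singleton] at hab'
  rw [hj, pair_comm, erase_insert (by simpa using Ne.symm hab), sum_singleton] at hba
  exact le_antisymm hab' hba

lemma minPW_eq_of_forall_le [DecidableEq I] {w : (I → ℝ) → ℝ} {H : Matrix J I (ZMod 2)}
    {a : ℝ} (hlb : ∀ x ∈ fundCone H, x ≠ 0 → a ≤ w x) {y : I → ℝ}
    (hy : y ∈ fundCone H) (hy0 : y ≠ 0) (hwy : w y ≤ a) : minPW w H = a := by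
  refine le_antisymm (sInf_le_of_le ⟨y, ⟨hy, hy0⟩, rfl⟩ (EReal.coe_le_coe_iff.2 hwy))
    (le_sInf ?_)
  rintro _ ⟨x, ⟨hx, hx0⟩, rfl⟩
  exact EReal.coe_le_coe_iff.2 (hlb x hx hx0)

end General

section Pseudoweights

variable {I : Type*} [Fintype I] {x : I → ℝ} {p : I}

lemma exists_max_pos_of_mem_fundCone [DecidableEq I] {J : Type*} {H : Matrix J I (ZMod 2)}
    (hx : x ∈ fundCone H) (hx0 : x ≠ 0) : ∃ p, (∀ i, x i ≤ x p) ∧ 0 < x p := by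
  obtain ⟨i, hi⟩ := Function.ne_iff.1 hx0
  obtain ⟨p, -, hp⟩ := exists_max_image univ x ⟨i, mem_univ i⟩
  exact ⟨p, fun k => hp k (mem_univ k),
    (lt_of_le_of_ne (hx.1 i) (Ne.symm hi)).trans_le (hp i (mem_univ i))⟩

lemma wMaxFrac_eq_sum_div (hp : ∀ i, x i ≤ x p) : wMaxFrac x = (∑ i, x i) / x p := by
  have : IsGreatest (Set.range x) (x p) := ⟨⟨p, rfl⟩, Set.forall_mem_range.2 hp⟩
  rw [wMaxFrac, this.csSup_eq]

lemma sum_div_le_wAWGNC (hx : ∀ i, 0 ≤ x i) (hp : ∀ i, x i ≤ x p) (hp0 : 0 < x p) :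
    (∑ i, x i) / x p ≤ wAWGNC x := by
  have hsq : 0 < ∑ i, x i ^ 2 :=
    (pow_pos hp0 2).trans_le (single_le_sum (fun i _ => sq_nonneg (x i)) (mem_univ p))
  have hle : ∑ i, x i ^ 2 ≤ x p * ∑ i, x i := by
    rw [mul_sum]
    gcongr with i
    rw [sq]
    exact mul_le_mul_of_nonneg_right (hp i) (hx i)
  rw [wAWGNC, div_le_div_iff₀ hp0 hsq]
  calc (∑ i, x i) * ∑ i, x i ^ 2 ≤ (∑ i, x i) * (x p * ∑ i, x i) :=
        mul_le_mul_of_nonneg_left hle (sum_nonneg fun i _ => hx i)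
    _ = (∑ i, x i) ^ 2 * x p := by ring

lemma sum_indicatorVec [DecidableEq I] (T : Finset I) : ∑ i, indicatorVec T i = #T := by
  simp [indicatorVec]

lemma wAWGNC_indicatorVec [DecidableEq I] {T : Finset I} (hT : T.Nonempty) :
    wAWGNC (indicatorVec T) = #T := by
  have hsq : ∀ i, indicatorVec T i ^ 2 = indicatorVec T i := fun i => by
    unfold indicatorVec; split_ifs <;> norm_num
  have hcard : (#T : ℝ) ≠ 0 := by exact_mod_cast hT.card_pos.ne'
  rw [wAWGNC, Finset.sum_congr rfl fun i _ => hsq i, sum_indicatorVec]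
  field_simp

lemma wMaxFrac_indicatorVec [DecidableEq I] {T : Finset I} (hT : T.Nonempty) :
    wMaxFrac (indicatorVec T) = #T := by
  obtain ⟨t, ht⟩ := hT
  rw [wMaxFrac_eq_sum_div (p := t) fun i => by unfold indicatorVec; split_ifs <;> simp,
    sum_indicatorVec]
  simp [indicatorVec, ht]

end Pseudoweights

section BSC

variable {n : ℕ}

lemma min_one_max_zero_sub_eq (ξ : ℝ) (i : ℕ) :
    min 1 (max 0 (ξ - i)) = min (max 0 ξ) (i + 1) - min (max 0 ξ) i := by
  have : (0 : ℝ) ≤ i := i.cast_nonneg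
  rcases le_total ξ i with h | h <;> rcases le_total ξ (i + 1) with h2 | h2 <;>
    rcases le_total ξ 0 with h3 | h3 <;>
    simp only [min_def, max_def] <;> split_ifs <;> linarith

lemma sum_min_one_max_zero_sub (ξ : ℝ) :
    ∑ i : Fin n, min 1 (max 0 (ξ - i)) = min (max 0 ξ) n := by
  rw [Fin.sum_univ_eq_sum_range (fun k : ℕ => min 1 (max 0 (ξ - k))) n]
  simp_rw [min_one_max_zero_sub_eq]
  have := sum_range_sub (fun k : ℕ => min (max 0 ξ) (k : ℝ)) n
  push_cast at this
  rw [this]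
  simp

lemma bigPhi_le_mul {x : Fin n → ℝ} {M : ℝ} (hM : ∀ i, x i ≤ M) (ξ : ℝ) :
    bigPhi x ξ ≤ M * min (max 0 ξ) n := by
  rw [← sum_min_one_max_zero_sub, mul_sum]
  exact sum_le_sum fun i _ =>
    mul_le_mul_of_nonneg_right (hM _) (le_min zero_le_one (le_max_left _ _))

lemma bigPhi_natCast (x : Fin n → ℝ) : bigPhi x n = ∑ i, x i := by
  have hone : ∀ i : Fin n, min 1 (max 0 ((n : ℝ) - i)) = 1 := fun i => by
    have : (i : ℝ) + 1 ≤ n := by exact_mod_cast i.is_lt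
    exact min_eq_left (le_max_of_le_right (by linarith))
  simp only [bigPhi, sortDesc, hone, mul_one]
  exact Equiv.sum_comp (Tuple.sort fun j => -x j) x

lemma sum_div_le_two_mul {x : Fin n → ℝ} {p : Fin n} (hx : ∀ i, 0 ≤ x i)
    (hp : ∀ i, x i ≤ x p) (hp0 : 0 < x p) {ξ : ℝ} (hξ : bigPhi x n / 2 ≤ bigPhi x ξ) :
    (∑ i, x i) / x p ≤ 2 * ξ := by
  have hsum : x p ≤ ∑ i, x i := single_le_sum (fun i _ => hx i) (mem_univ p)
  have hΦ := (bigPhi_le_mul hp ξ).trans (mul_le_mul_of_nonneg_left (min_le_left _ _) hp0.le)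
  rw [bigPhi_natCast] at hξ
  have hξ0 : 0 ≤ ξ := by
    by_contra! h
    rw [max_eq_left h.le, mul_zero] at hΦ
    linarith
  rw [max_eq_right hξ0] at hΦ
  rw [div_le_iff₀ hp0]
  linarith

lemma sum_div_le_wBSC {x : Fin n → ℝ} {p : Fin n} (hx : ∀ i, 0 ≤ x i)
    (hp : ∀ i, x i ≤ x p) (hp0 : 0 < x p) : (∑ i, x i) / x p ≤ wBSC x := by
  have hn : (n : ℝ) ∈ {ξ : ℝ | bigPhi x n / 2 ≤ bigPhi x ξ} := by
    show bigPhi x n / 2 ≤ bigPhi x n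
    linarith [bigPhi_natCast x ▸ sum_nonneg fun i (_ : i ∈ univ) => hx i]
  have := le_csInf ⟨_, hn⟩ fun ξ hξ => show (∑ i, x i) / x p / 2 ≤ ξ by
    linarith [sum_div_le_two_mul hx hp hp0 hξ]
  rw [wBSC]
  linarith

lemma sortDesc_indicatorVec_of_lt {T : Finset (Fin n)} {i : Fin n} (hi : (i : ℕ) < #T) :
    sortDesc (indicatorVec T) i = 1 := by
  set σ := Tuple.sort fun j => -indicatorVec T j
  have hanti : ∀ a b, a ≤ b → indicatorVec T (σ b) ≤ indicatorVec T (σ a) :=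
    fun _ _ hab => by simpa using Tuple.monotone_sort (fun j => -indicatorVec T j) hab
  by_contra hne
  have hσi : σ i ∉ T := fun h => hne (show indicatorVec T (σ i) = 1 by simp [indicatorVec, h])
  -- sorted non-increasingly, everything from position `i` on is outside `T`
  have hsub : T ⊆ (Iio i).map σ.toEmbedding := fun t ht => by
    refine mem_map.2 ⟨σ.symm t, mem_Iio.2 (lt_of_not_ge fun hge => hσi ?_), by simp⟩
    have := hanti i _ hge
    norm_num [indicatorVec, ht, hσi] at this
  have := card_le_card hsub
  rw [card_map, Fin.card_Iio] at this
  omega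

lemma wBSC_indicatorVec_le {T : Finset (Fin n)} (hT : T.Nonempty) :
    wBSC (indicatorVec T) ≤ #T := by
  obtain ⟨t, ht⟩ := hT
  have hx : ∀ i, 0 ≤ indicatorVec T i := fun i => by unfold indicatorVec; split_ifs <;> norm_num
  have hp : ∀ i, indicatorVec T i ≤ indicatorVec T t := fun i => by
    unfold indicatorVec; split_ifs <;> simp
  have hp0 : 0 < indicatorVec T t := by simp [indicatorVec, ht]
  have hT : #T ≤ n := card_le_univ T |>.trans_eq (Fintype.card_fin n)
  -- only the first `#T / 2` sorted entries are weighted, and they all equal `1`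
  have hhalf : bigPhi (indicatorVec T) (#T / 2) = #T / 2 := by
    have hterm : ∀ i : Fin n, sortDesc (indicatorVec T) i * min 1 (max 0 ((#T : ℝ) / 2 - i)) =
        min 1 (max 0 ((#T : ℝ) / 2 - i)) := fun i => by
      by_cases hi : (i : ℕ) < #T
      · rw [sortDesc_indicatorVec_of_lt hi, one_mul]
      · have : (#T : ℝ) ≤ i := by exact_mod_cast not_lt.1 hi
        rw [max_eq_left (by linarith), min_eq_right zero_le_one, mul_zero]
    rw [bigPhi, Finset.sum_congr rfl fun i _ => hterm i, sum_min_one_max_zero_sub,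
      max_eq_right (by positivity), min_eq_left]
    have : (#T : ℝ) ≤ n := by exact_mod_cast hT
    linarith
  have hmem : bigPhi (indicatorVec T) n / 2 ≤ bigPhi (indicatorVec T) (#T / 2) := by
    rw [hhalf, bigPhi_natCast, sum_indicatorVec]
  have hbdd : BddBelow {ξ : ℝ | bigPhi (indicatorVec T) n / 2 ≤ bigPhi (indicatorVec T) ξ} :=
    ⟨(∑ i, indicatorVec T i) / indicatorVec T t / 2, fun ξ hξ => by
      linarith [sum_div_le_two_mul hx hp hp0 hξ]⟩
  rw [wBSC]
  linarith [csInf_le hbdd (a := (#T : ℝ) / 2) hmem]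

end BSC

section ChainRel

variable {J I : Type*} [Fintype I] [DecidableEq I]

def rowPairRel (H : Matrix J I (ZMod 2)) (a b : I) : Prop := ∃ j, rowSupp H j = {a, b}

instance (H : Matrix J I (ZMod 2)) : Std.Symm (rowPairRel H) :=
  ⟨fun _ _ ⟨j, hj⟩ => ⟨j, hj.trans (pair_comm _ _)⟩⟩

lemma chainRel_iff_reflTransGen (H : Matrix J I (ZMod 2)) (a b : I) :
    chainRel H a b ↔ Relation.ReflTransGen (rowPairRel H) a b := by
  constructor
  · rintro (rfl | ⟨ℓ, -, c, r, rfl, rfl, hstep⟩)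
    · exact .refl
    have hc : ∀ t : Fin (ℓ + 1), Relation.ReflTransGen (rowPairRel H) (c 0) (c t) := by
      intro t
      induction t using Fin.induction with
      | zero => exact .refl
      | succ u ih => exact ih.tail ⟨r u, hstep u⟩
    exact hc _
  · intro h
    induction h with
    | refl => exact .inl rfl
    | @tail b' b _ hstep ih =>
      obtain ⟨j, hj⟩ := hstep
      rcases ih with hab' | ⟨ℓ, -, c, r, rfl, rfl, hc⟩
      · subst hab'
        exact .inr ⟨1, le_rfl, ![a, b], ![j], rfl, rfl, fun t => by fin_cases t; simpa using hj⟩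
      refine .inr ⟨ℓ + 1, by omega, Fin.snoc c b, Fin.snoc r j, ?_, by simp, fun t => ?_⟩
      · exact Fin.snoc_castSucc (i := 0) ..
      induction t using Fin.lastCases with
      | last => simpa only [Fin.snoc_castSucc, Fin.succ_last, Fin.snoc_last] using hj
      | cast u => simpa only [Fin.snoc_castSucc, Fin.succ_castSucc] using hc u

lemma chainRel_equivalence (H : Matrix J I (ZMod 2)) : Equivalence (chainRel H) := by
  have h := chainRel_iff_reflTransGen H
  exact ⟨fun _ => .inl rfl, fun hab => (h _ _).2 (Std.Symm.symm _ _ ((h _ _).1 hab)),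
    fun hab hbc => (h _ _).2 (((h _ _).1 hab).trans ((h _ _).1 hbc))⟩

lemma chainRel_of_rowSupp_eq_pair {H : Matrix J I (ZMod 2)} {j : J} {a b : I}
    (hj : rowSupp H j = {a, b}) : chainRel H a b :=
  (chainRel_iff_reflTransGen H a b).2 (.single ⟨j, hj⟩)

open Classical in
noncomputable def chainClass (H : Matrix J I (ZMod 2)) (s : I) : Finset I := {i | chainRel H i s}

lemma mem_chainClass {H : Matrix J I (ZMod 2)} {s i : I} :
    i ∈ chainClass H s ↔ chainRel H i s := by
  simp [chainClass]

lemma chainClass_closed {H : Matrix J I (ZMod 2)} {s a b : I} (hab : chainRel H a b)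
    (ha : a ∈ chainClass H s) : b ∈ chainClass H s :=
  have e := chainRel_equivalence H
  mem_chainClass.2 (e.trans (e.symm hab) (mem_chainClass.1 ha))

end ChainRel

section WeightTwoRows

variable {m : ℕ} {I : Type*} [Fintype I] [DecidableEq I] {H : Matrix (Fin (m + 1)) I (ZMod 2)}
  {Hh : Matrix (Fin m) I (ZMod 2)} {C : Submodule (ZMod 2) (I → ZMod 2)} {x : I → ℝ}

omit [DecidableEq I] in
lemma rowSupp_castSucc (hHh : Hh = Matrix.of fun j i => H j.castSucc i) (j : Fin m) :
    rowSupp H j.castSucc = rowSupp Hh j := by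
  subst hHh; rfl

lemma eq_of_chainRel (hHh : Hh = Matrix.of fun j i => H j.castSucc i) (hx : x ∈ fundCone H)
    {a b : I} (hab : chainRel Hh a b) : x a = x b := by
  rw [chainRel_iff_reflTransGen] at hab
  induction hab with
  | refl => rfl
  | tail _ hstep ih =>
    obtain ⟨j, hj⟩ := hstep
    exact ih.trans (eq_of_rowSupp_eq_pair hx ((rowSupp_castSucc hHh j).trans hj))

lemma sum_chainClass (hHh : Hh = Matrix.of fun j i => H j.castSucc i) (hx : x ∈ fundCone H)
    (s : I) : ∑ i ∈ chainClass Hh s, x i = #(chainClass Hh s) * x s := by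
  rw [sum_congr rfl fun i hi => eq_of_chainRel hHh hx (mem_chainClass.1 hi), sum_const,
    nsmul_eq_mul]

lemma minDist_le_card_of_chainRel_closed (hH : IsParityCheck H C)
    (hHh : Hh = Matrix.of fun j i => H j.castSucc i) (hrows : ∀ j, #(rowSupp Hh j) = 2)
    {T : Finset I} (hT : ∀ a b, chainRel Hh a b → a ∈ T → b ∈ T)
    (hlast : Even #(rowSupp H (Fin.last m) ∩ T)) (hne : T.Nonempty) : minDist C ≤ #T := by
  refine minDist_le_card_of_even_card_inter hH (fun j => ?_) hne
  induction j using Fin.lastCases with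
  | last => exact hlast
  | cast j =>
    obtain ⟨a, b, hab, hj⟩ := card_eq_two.1 (hrows j)
    have hchain := chainRel_of_rowSupp_eq_pair hj
    rw [rowSupp_castSucc hHh, hj]
    by_cases ha : a ∈ T
    · rw [insert_inter_of_mem ha, singleton_inter_of_mem (hT a b hchain ha),
        card_pair_eq_two_iff.2 hab]
      exact even_two
    · have hb : b ∉ T := fun hb => ha (hT b a ((chainRel_equivalence Hh).symm hchain) hb)
      rw [insert_inter_of_notMem ha, singleton_inter_of_notMem hb, card_empty]
      exact ⟨0, rfl⟩

lemma minDist_le_card_chainClass (hH : IsParityCheck H C)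
    (hHh : Hh = Matrix.of fun j i => H j.castSucc i) (hrows : ∀ j, #(rowSupp Hh j) = 2) {p : I}
    (hp : ∀ s ∈ rowSupp H (Fin.last m), ¬ chainRel Hh s p) :
    minDist C ≤ #(chainClass Hh p) := by
  refine minDist_le_card_of_chainRel_closed hH hHh hrows (fun _ _ => chainClass_closed) ?_
    ⟨p, mem_chainClass.2 (.inl rfl)⟩
  rw [eq_empty_of_forall_notMem fun i hi => hp i (mem_inter.1 hi).1
    (mem_chainClass.1 (mem_inter.1 hi).2), card_empty]
  exact ⟨0, rfl⟩

section LastRow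

variable (hlast : ∀ i ∈ rowSupp H (Fin.last m), ∀ i' ∈ rowSupp H (Fin.last m),
  chainRel Hh i i' → i = i')
include hlast

lemma rowSupp_last_inter_chainClass {s : I} (hs : s ∈ rowSupp H (Fin.last m)) :
    rowSupp H (Fin.last m) ∩ chainClass Hh s = {s} := by
  ext i
  simp only [mem_inter, mem_chainClass, mem_singleton]
  exact ⟨fun ⟨hi, his⟩ => hlast i hi s hs his, by rintro rfl; exact ⟨hs, .inl rfl⟩⟩

lemma disjoint_chainClass {s r : I} (hs : s ∈ rowSupp H (Fin.last m))
    (hr : r ∈ rowSupp H (Fin.last m)) (hsr : s ≠ r) :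
    Disjoint (chainClass Hh s) (chainClass Hh r) := by
  refine disjoint_left.2 fun i his hir => hsr (hlast s hs r hr ?_)
  have e := chainRel_equivalence Hh
  exact e.trans (e.symm (mem_chainClass.1 his)) (mem_chainClass.1 hir)

lemma minDist_le_card_chainClass_add_card_chainClass (hH : IsParityCheck H C)
    (hHh : Hh = Matrix.of fun j i => H j.castSucc i) (hrows : ∀ j, #(rowSupp Hh j) = 2)
    {s r : I} (hs : s ∈ rowSupp H (Fin.last m)) (hr : r ∈ rowSupp H (Fin.last m))
    (hsr : s ≠ r) : minDist C ≤ #(chainClass Hh s) + #(chainClass Hh r) := by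
  rw [← card_union_of_disjoint (disjoint_chainClass hlast hs hr hsr)]
  refine minDist_le_card_of_chainRel_closed hH hHh hrows (fun a b hab => ?_) ?_
    ⟨s, mem_union_left _ (mem_chainClass.2 (.inl rfl))⟩
  · simp only [mem_union]
    exact Or.imp (chainClass_closed hab) (chainClass_closed hab)
  · rw [inter_union_distrib_left, rowSupp_last_inter_chainClass hlast hs,
      rowSupp_last_inter_chainClass hlast hr, ← insert_eq, card_pair_eq_two_iff.2 hsr]
    exact even_two

lemma sum_card_chainClass_mul_le (hHh : Hh = Matrix.of fun j i => H j.castSucc i)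
    (hx : x ∈ fundCone H) :
    ∑ s ∈ rowSupp H (Fin.last m), #(chainClass Hh s) * x s ≤ ∑ i, x i := by
  rw [← sum_congr rfl fun s _ => sum_chainClass hHh hx s,
    ← sum_biUnion fun s hs r hr hsr => disjoint_chainClass hlast hs hr hsr]
  exact sum_le_univ_sum_of_nonneg hx.1

lemma minDist_mul_le_sum (hH : IsParityCheck H C)
    (hHh : Hh = Matrix.of fun j i => H j.castSucc i) (hrows : ∀ j, #(rowSupp Hh j) = 2)
    (hx : x ∈ fundCone H) (p : I) : minDist C * x p ≤ ∑ i, x i := by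
  set S := rowSupp H (Fin.last m)
  by_cases hpS : ∃ s ∈ S, chainRel Hh s p
  swap
  · push Not at hpS
    calc (minDist C : ℝ) * x p ≤ #(chainClass Hh p) * x p := by
          gcongr
          · exact hx.1 p
          · exact minDist_le_card_chainClass hH hHh hrows hpS
      _ = ∑ i ∈ chainClass Hh p, x i := (sum_chainClass hHh hx p).symm
      _ ≤ ∑ i, x i := sum_le_univ_sum_of_nonneg hx.1
  obtain ⟨s, hs, hsp⟩ := hpS
  rw [← eq_of_chainRel hHh hx hsp]
  have hcone : x s ≤ ∑ i ∈ S.erase s, x i := hx.2 _ s hs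
  rcases (S.erase s).eq_empty_or_nonempty with hempty | hne
  · rw [hempty, sum_empty] at hcone
    rw [le_antisymm hcone (hx.1 s), mul_zero]
    exact sum_nonneg fun i _ => hx.1 i
  obtain ⟨r, hr, hrmin⟩ := exists_min_image (S.erase s) (fun i => #(chainClass Hh i)) hne
  have hd := minDist_le_card_chainClass_add_card_chainClass (C := C) hlast hH hHh hrows hs
    (mem_of_mem_erase hr) (ne_of_mem_erase hr).symm
  calc (minDist C : ℝ) * x s ≤ (#(chainClass Hh s) + #(chainClass Hh r)) * x s := by
        gcongr
        · exact hx.1 s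
        · exact_mod_cast hd
    _ ≤ #(chainClass Hh s) * x s + #(chainClass Hh r) * ∑ i ∈ S.erase s, x i := by
        rw [add_mul]
        gcongr
    _ ≤ #(chainClass Hh s) * x s + ∑ i ∈ S.erase s, #(chainClass Hh i) * x i := by
        rw [mul_sum]
        exact add_le_add_right (sum_le_sum fun i hi =>
          mul_le_mul_of_nonneg_right (Nat.cast_le.2 (hrmin i hi)) (hx.1 i)) _
    _ = ∑ i ∈ S, #(chainClass Hh i) * x i :=
        add_sum_erase S (fun i => (#(chainClass Hh i) : ℝ) * x i) hs
    _ ≤ ∑ i, x i := sum_card_chainClass_mul_le hlast hHh hx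

end LastRow

end WeightTwoRows

end ParityCheck

/-- Let `H` be a parity-check matrix of the nonzero binary linear code `C`
whose first rows (all but the last) have Hamming weight exactly 2; let `Ĥ` consist of these
rows and `R` be its associated chain equivalence relation. If the support of the last row of
`H` intersects each equivalence class of `R` in at most one element, then
`d(C) = w_AWGNC^min(H) = w_BSC^min(H) = w_maxfrac^min(H)`. -/
theorem statement7 {m n : ℕ} (C : Submodule (ZMod 2) (Fin n → ZMod 2)) (hC : C ≠ ⊥)
    (H : Matrix (Fin (m + 1)) (Fin n) (ZMod 2)) (hH : IsParityCheck H C)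
    (Hhat : Matrix (Fin m) (Fin n) (ZMod 2))
    (hHhat : Hhat = Matrix.of fun j i => H j.castSucc i)
    (hrows : ∀ j, (rowSupp Hhat j).card = 2)
    (hlast : ∀ i ∈ rowSupp H (Fin.last m), ∀ i' ∈ rowSupp H (Fin.last m),
      chainRel Hhat i i' → i = i') :
    ((minDist C : ℝ) : EReal) = minPW wAWGNC H ∧
    ((minDist C : ℝ) : EReal) = minPW wBSC H ∧
    ((minDist C : ℝ) : EReal) = minPW wMaxFrac H := by
  open ParityCheck in
  obtain ⟨c, hcC, hc0, hcd⟩ := exists_hammingNorm_eq_minDist hC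
  set T : Finset (Fin n) := {i | c i ≠ 0}
  have hT : T.Nonempty := by
    obtain ⟨i, hi⟩ := Function.ne_iff.1 hc0
    exact ⟨i, by simpa [T] using hi⟩
  have hy : indicatorVec T ∈ fundCone H := indicatorVec_support_mem_fundCone ((hH c).1 hcC)
  have hy0 : indicatorVec T ≠ 0 := fun h => by
    obtain ⟨t, ht⟩ := hT
    simpa [indicatorVec, ht] using congrFun h t
  have key : ∀ w : (Fin n → ℝ) → ℝ,
      (∀ x p, (∀ i, 0 ≤ x i) → (∀ i, x i ≤ x p) → 0 < x p →
        (∑ i, x i) / x p ≤ w x) →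
      w (indicatorVec T) ≤ #T → ((minDist C : ℝ) : EReal) = minPW w H := by
    intro w hw hwy
    refine (minPW_eq_of_forall_le (fun x hx hx0 => ?_) hy hy0 (hcd ▸ hwy)).symm
    obtain ⟨p, hp, hp0⟩ := exists_max_pos_of_mem_fundCone hx hx0
    exact ((le_div_iff₀ hp0).2 (minDist_mul_le_sum hlast hH hHhat hrows hx p)).trans
      (hw x p hx.1 hp hp0)
  exact ⟨key _ (fun _ _ => sum_div_le_wAWGNC) (wAWGNC_indicatorVec hT).le,
    key _ (fun _ _ => sum_div_le_wBSC) (wBSC_indicatorVec_le hT),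
    key _ (fun _ _ _ hp _ => (wMaxFrac_eq_sum_div hp).ge) (wMaxFrac_indicatorVec hT).le⟩
end

section
/- Let H ∈ 𝔽₂^{m×n} be a matrix whose first m−1 rows all have Hamming weight exactly 2; let Ĥ be the (m−1)×n matrix of these rows, R the equivalence relation on I associated with Ĥ, and 𝒮 its set of equivalence classes. Assume the support I_m of the last row of H intersects each class in at most one element, and let 𝒮' = {S ∈ 𝒮 : |S ∩ I_m| = 1} and 𝒮'' = 𝒮 ∖ 𝒮'. If |𝒮'| ≥ 2 or 𝒮'' ≠ ∅, then the minimum max-fractional weight satisfies w_maxfrac^min(H) = min( min_{S,T ∈ 𝒮', S ≠ T} (|S| + |T|), min_{S ∈ 𝒮''} |S| ), where a minimum over the empty set is +∞. -/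
open Matrix BigOperators Finset

/-!
A weight-two row with support `{a, b}` forces `x a = x b` on the fundamental cone, so cone points
are constant on chain classes. Scale a nonzero cone point so that its maximum is `1`, attained on
a class `S`. If `S` avoids the last row, the coordinate sum is at least `|S|`. If `S` meets it at
`ℓ`, the last-row inequality at `ℓ` puts mass at least `1` on the other last-row columns; these
lie in classes distinct from `S` and from each other, so the sum is at least `|S| + |T|` for the
smallest such class `T`. Conversely, a class avoiding the last row, and the union of two classes
meeting it, are stopping sets, and the indicator of a stopping set is a cone point whose
max-fractional weight is its size.
-/

open Relation

section Equivalence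

variable {I : Type*} [Fintype I] {r : I → I → Prop} {x : I → ℝ}

theorem sum_ncard_mul_le_sum (hr : Equivalence r) (hx0 : ∀ i, 0 ≤ x i)
    (hx : ∀ a b, r a b → x a = x b) {K : Finset I}
    (hK : (K : Set I).Pairwise fun a b => ¬ r a b) :
    ∑ k ∈ K, ({i | r k i}.ncard : ℝ) * x k ≤ ∑ i, x i := by
  classical
  have hdisj : (K : Set I).PairwiseDisjoint fun k => Finset.univ.filter (r k) :=
    fun a _ b _ hab => Finset.disjoint_filter.2 fun c _ hac hbc =>
      hK ‹_› ‹_› hab (hr.trans hac (hr.symm hbc))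
  calc ∑ k ∈ K, ({i | r k i}.ncard : ℝ) * x k
      = ∑ k ∈ K, ∑ i ∈ Finset.univ.filter (r k), x i := by
        refine Finset.sum_congr rfl fun k _ => ?_
        rw [Finset.sum_congr rfl fun i hi => (hx k i (Finset.mem_filter.1 hi).2).symm]
        simp [Set.ncard_eq_toFinset_card']
    _ = ∑ i ∈ K.biUnion fun k => Finset.univ.filter (r k), x i :=
        (Finset.sum_biUnion hdisj).symm
    _ ≤ ∑ i, x i := Finset.sum_le_sum_of_subset_of_nonneg (Finset.subset_univ _)
        fun i _ _ => hx0 i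

theorem exists_ncard_add_ncard_mul_le_sum [DecidableEq I] (hr : Equivalence r)
    (hx0 : ∀ i, 0 ≤ x i) (hx : ∀ a b, r a b → x a = x b) {L : Finset I}
    (hL : (L : Set I).Pairwise fun a b => ¬ r a b)
    {ℓ : I} (hℓ : ℓ ∈ L) (hpos : 0 < x ℓ) (hsum : x ℓ ≤ ∑ i ∈ L.erase ℓ, x i) :
    ∃ t ∈ L.erase ℓ,
      (({i | r ℓ i}.ncard + {i | r t i}.ncard : ℕ) : ℝ) * x ℓ ≤ ∑ i, x i := by
  have hne : (L.erase ℓ).Nonempty := by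
    by_contra h
    rw [Finset.not_nonempty_iff_eq_empty.1 h, Finset.sum_empty] at hsum
    linarith
  obtain ⟨t, ht, htmin⟩ :=
    Finset.exists_min_image (L.erase ℓ) (fun i => {i' | r i i'}.ncard) hne
  refine ⟨t, ht, ?_⟩
  calc (({i | r ℓ i}.ncard + {i | r t i}.ncard : ℕ) : ℝ) * x ℓ
      ≤ {i | r ℓ i}.ncard * x ℓ + ∑ k ∈ L.erase ℓ, ({i | r t i}.ncard : ℝ) * x k := by
        rw [← Finset.mul_sum]
        push_cast
        linarith [mul_le_mul_of_nonneg_left hsum (Nat.cast_nonneg {i | r t i}.ncard)]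
    _ ≤ {i | r ℓ i}.ncard * x ℓ + ∑ k ∈ L.erase ℓ, ({i | r k i}.ncard : ℝ) * x k := by
        have hmin (k) (hk : k ∈ L.erase ℓ) :
            ({i | r t i}.ncard : ℝ) * x k ≤ {i | r k i}.ncard * x k :=
          mul_le_mul_of_nonneg_right (Nat.cast_le.2 (htmin k hk)) (hx0 k)
        linarith [Finset.sum_le_sum hmin]
    _ = ∑ k ∈ L, ({i | r k i}.ncard : ℝ) * x k :=
        Finset.add_sum_erase L (fun k => ({i | r k i}.ncard : ℝ) * x k) hℓ
    _ ≤ ∑ i, x i := sum_ncard_mul_le_sum hr hx0 hx hL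

end Equivalence

section ChainRel

variable {J I : Type*} [Fintype I] [DecidableEq I] {Hh : Matrix J I (ZMod 2)}

def chainStep (Hh : Matrix J I (ZMod 2)) (a b : I) : Prop :=
  ∃ j, rowSupp Hh j = {a, b}

instance : Std.Symm (chainStep Hh) where
  symm _ _ := fun ⟨j, hj⟩ => ⟨j, by rw [hj, Finset.pair_comm]⟩

theorem chainRel_iff_reflTransGen_s8 {a b : I} :
    chainRel Hh a b ↔ ReflTransGen (chainStep Hh) a b := by
  constructor
  · rintro (rfl | ⟨ℓ, -, c, r, rfl, rfl, hr⟩)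
    · exact .refl
    · have hprefix (k : Fin (ℓ + 1)) : ReflTransGen (chainStep Hh) (c 0) (c k) := by
        induction k using Fin.induction with
        | zero => exact .refl
        | succ k ih => exact ih.tail ⟨r k, hr k⟩
      exact hprefix _
  · intro h
    induction h with
    | refl => exact .inl rfl
    | @tail b d _ hbd ih =>
      obtain ⟨j, hj⟩ := hbd
      rcases ih with rfl | ⟨ℓ, -, c, r, hc0, hcl, hr⟩
      · refine .inr ⟨1, le_rfl, ![a, d], ![j], rfl, rfl, fun t => ?_⟩
        rw [Subsingleton.elim t 0]
        simpa using hj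
      · refine .inr ⟨ℓ + 1, by omega, Fin.snoc c d, Fin.snoc r j, ?_, Fin.snoc_last .., ?_⟩
        · exact (Fin.snoc_castSucc (α := fun _ => I) d c 0).trans hc0
        · intro t
          induction t using Fin.lastCases with
          | last => simpa [hcl] using hj
          | cast u =>
            simp only [Fin.succ_castSucc, Fin.snoc_castSucc]
            exact hr u

theorem chainRel_equivalence : Equivalence (chainRel Hh) where
  refl _ := .inl rfl
  symm h := chainRel_iff_reflTransGen_s8.2 <|
    Std.Symm.symm _ _ (chainRel_iff_reflTransGen_s8.1 h)
  trans h₁ h₂ := chainRel_iff_reflTransGen_s8.2 <|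
    (chainRel_iff_reflTransGen_s8.1 h₁).trans (chainRel_iff_reflTransGen_s8.1 h₂)

theorem chainRel_of_chainStep {a b : I} (h : chainStep Hh a b) : chainRel Hh a b :=
  chainRel_iff_reflTransGen_s8.2 (.single h)

theorem eq_of_chainRel {x : I → ℝ} (hx : ∀ a b, chainStep Hh a b → x a = x b) {a b : I}
    (h : chainRel Hh a b) : x a = x b := by
  rw [chainRel_iff_reflTransGen_s8] at h
  induction h with
  | refl => rfl
  | tail _ hs ih => exact ih.trans (hx _ _ hs)

def chainClass (Hh : Matrix J I (ZMod 2)) (i : I) : Set I := {i' | chainRel Hh i i'}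

def classesMeeting (Hh : Matrix J I (ZMod 2)) (L : Finset I) : Set (Set I) :=
  {S | (∃ i, S = chainClass Hh i) ∧ ∃ i ∈ S, i ∈ L}

def classesAvoiding (Hh : Matrix J I (ZMod 2)) (L : Finset I) : Set (Set I) :=
  {S | (∃ i, S = chainClass Hh i) ∧ ¬∃ i ∈ S, i ∈ L}

theorem mem_chainClass_self (i : I) : i ∈ chainClass Hh i := chainRel_equivalence.refl i

theorem chainClass_eq_iff {a b : I} : chainClass Hh a = chainClass Hh b ↔ chainRel Hh a b := by
  refine ⟨fun h => show b ∈ chainClass Hh a from h ▸ mem_chainClass_self b, fun h => ?_⟩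
  ext c
  exact ⟨chainRel_equivalence.trans (chainRel_equivalence.symm h), chainRel_equivalence.trans h⟩

theorem disjoint_chainClass {a b : I} (h : chainClass Hh a ≠ chainClass Hh b) :
    Disjoint (chainClass Hh a) (chainClass Hh b) :=
  Set.disjoint_left.2 fun _ hca hcb =>
    h (chainClass_eq_iff.2 (chainRel_equivalence.trans hca (chainRel_equivalence.symm hcb)))

theorem mem_chainClass_of_chainRel {i a b : I} (ha : a ∈ chainClass Hh i)
    (h : chainRel Hh a b) : b ∈ chainClass Hh i :=
  chainRel_equivalence.trans ha h

theorem chainRel_of_mem_chainClass {i a b : I} (ha : a ∈ chainClass Hh i)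
    (hb : b ∈ chainClass Hh i) : chainRel Hh a b :=
  chainRel_equivalence.trans (chainRel_equivalence.symm ha) hb

end ChainRel

section MaxFrac

variable {I : Type*} [Fintype I]

theorem wMaxFrac_eq_of_le {x : I → ℝ} {i₀ : I} (h : ∀ i, x i ≤ x i₀) :
    wMaxFrac x = (∑ i, x i) / x i₀ := by
  have hmax : IsGreatest (Set.range x) (x i₀) :=
    ⟨⟨i₀, rfl⟩, by rintro _ ⟨i, rfl⟩; exact h i⟩
  rw [wMaxFrac, hmax.csSup_eq]

theorem wMaxFrac_indicator {U : Set I} (hU : U.Nonempty) :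
    wMaxFrac (U.indicator (1 : I → ℝ)) = U.ncard := by
  classical
  obtain ⟨u, hu⟩ := hU
  rw [wMaxFrac_eq_of_le (i₀ := u) fun i => by
    by_cases hi : i ∈ U <;> simp [hi, hu]]
  simp [hu, Set.indicator_apply, Finset.sum_boole, Set.ncard_eq_toFinset_card']

end MaxFrac

section Cone

variable {J I : Type*} [Fintype I] [DecidableEq I] {H : Matrix J I (ZMod 2)}

theorem eq_of_mem_fundCone_of_rowSupp_eq_pair {x : I → ℝ} (hx : x ∈ fundCone H) {j : J}
    {a b : I} (hj : rowSupp H j = {a, b}) : x a = x b := by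
  rcases eq_or_ne a b with rfl | hab
  · rfl
  have hab' := hx.2 j a (by simp [hj])
  have hba := hx.2 j b (by simp [hj])
  rw [hj, Finset.erase_insert (by simpa using hab)] at hab'
  rw [hj, Finset.pair_comm, Finset.erase_insert (by simpa using hab.symm)] at hba
  simp only [Finset.sum_singleton] at hab' hba
  exact le_antisymm hab' hba

def IsStoppingSet (H : Matrix J I (ZMod 2)) (U : Set I) : Prop :=
  ∀ j, ∀ ℓ ∈ rowSupp H j, ℓ ∈ U → ∃ ℓ' ∈ (rowSupp H j).erase ℓ, ℓ' ∈ U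

theorem IsStoppingSet.indicator_mem_fundCone {U : Set I} (hU : IsStoppingSet H U) :
    U.indicator 1 ∈ fundCone H := by
  have hnn (i : I) : 0 ≤ U.indicator (1 : I → ℝ) i :=
    Set.indicator_nonneg (fun _ _ => zero_le_one) i
  refine ⟨hnn, fun j ℓ hℓ => ?_⟩
  by_cases hℓU : ℓ ∈ U
  · obtain ⟨ℓ', hℓ', hℓ'U⟩ := hU j ℓ hℓ hℓU
    calc U.indicator 1 ℓ = U.indicator (1 : I → ℝ) ℓ' := by simp [hℓU, hℓ'U]
      _ ≤ _ := Finset.single_le_sum (fun i _ => hnn i) hℓ'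
  · rw [Set.indicator_of_notMem hℓU]
    exact Finset.sum_nonneg fun i _ => hnn i

theorem IsStoppingSet.minPW_wMaxFrac_le {U : Set I} (hU : IsStoppingSet H U) (hne : U.Nonempty) :
    minPW wMaxFrac H ≤ (U.ncard : ℝ) := by
  obtain ⟨u, hu⟩ := hne
  refine sInf_le ⟨U.indicator 1, ⟨hU.indicator_mem_fundCone, fun h => ?_⟩, ?_⟩
  · simpa [hu] using congrFun (Set.mem_singleton_iff.1 h) u
  · simp only [wMaxFrac_indicator ⟨u, hu⟩]

end Cone

section LastRow

variable {m : ℕ} {I : Type*} [Fintype I] [DecidableEq I] {H : Matrix (Fin (m + 1)) I (ZMod 2)}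
  {Hhat : Matrix (Fin m) I (ZMod 2)}

theorem isStoppingSet_of_chainClosed
    (hsupp : ∀ j, rowSupp Hhat j = rowSupp H j.castSucc)
    (hrows : ∀ j, (rowSupp Hhat j).card = 2)
    {U : Set I} (hclosed : ∀ a b, chainRel Hhat a b → a ∈ U → b ∈ U)
    (hlastU : ∀ ℓ ∈ rowSupp H (Fin.last m), ℓ ∈ U →
      ∃ ℓ' ∈ (rowSupp H (Fin.last m)).erase ℓ, ℓ' ∈ U) :
    IsStoppingSet H U := by
  intro j
  induction j using Fin.lastCases with
  | last => exact hlastU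
  | cast j =>
    obtain ⟨a, b, hab, hj⟩ := Finset.card_eq_two.1 (hrows j)
    have hrel : chainRel Hhat a b := chainRel_of_chainStep ⟨j, hj⟩
    rw [← hsupp, hj]
    rintro ℓ hℓ hℓU
    rcases Finset.mem_insert.1 hℓ with rfl | hℓ
    · exact ⟨b, by simp [hab.symm], hclosed _ _ hrel hℓU⟩
    · obtain rfl := Finset.mem_singleton.1 hℓ
      exact ⟨a, by simp [hab], hclosed _ _ (chainRel_equivalence.symm hrel) hℓU⟩

theorem minPW_wMaxFrac_le_ncard_add_ncard
    (hsupp : ∀ j, rowSupp Hhat j = rowSupp H j.castSucc)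
    (hrows : ∀ j, (rowSupp Hhat j).card = 2)
    (hlast : ∀ i ∈ rowSupp H (Fin.last m), ∀ i' ∈ rowSupp H (Fin.last m),
      chainRel Hhat i i' → i = i')
    {S T : Set I} (hS : S ∈ classesMeeting Hhat (rowSupp H (Fin.last m)))
    (hT : T ∈ classesMeeting Hhat (rowSupp H (Fin.last m))) (hST : S ≠ T) :
    minPW wMaxFrac H ≤ ((S.ncard + T.ncard : ℕ) : ℝ) := by
  obtain ⟨⟨a, rfl⟩, ℓ, hℓS, hℓ⟩ := hS
  obtain ⟨⟨b, rfl⟩, ℓ', hℓ'T, hℓ'⟩ := hT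
  rw [← Set.ncard_union_eq (disjoint_chainClass hST)]
  refine (isStoppingSet_of_chainClosed hsupp hrows
    (fun c d hcd => Or.imp (mem_chainClass_of_chainRel · hcd) (mem_chainClass_of_chainRel · hcd))
    fun k hk hkU => ?_).minPW_wMaxFrac_le ⟨a, .inl (mem_chainClass_self a)⟩
  -- `k` is `ℓ` or `ℓ'` by `hlast`, and the other one is the required second last-row column
  have hℓℓ' : ℓ ≠ ℓ' := fun h =>
    Set.disjoint_left.1 (disjoint_chainClass hST) hℓS (h ▸ hℓ'T)
  rcases hkU with hkS | hkT
  · obtain rfl : k = ℓ := hlast k hk ℓ hℓ (chainRel_of_mem_chainClass hkS hℓS)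
    exact ⟨ℓ', Finset.mem_erase.2 ⟨hℓℓ'.symm, hℓ'⟩, .inr hℓ'T⟩
  · obtain rfl : k = ℓ' := hlast k hk ℓ' hℓ' (chainRel_of_mem_chainClass hkT hℓ'T)
    exact ⟨ℓ, Finset.mem_erase.2 ⟨hℓℓ', hℓ⟩, .inl hℓS⟩

theorem minPW_wMaxFrac_le_ncard_of_mem_classesAvoiding
    (hsupp : ∀ j, rowSupp Hhat j = rowSupp H j.castSucc)
    (hrows : ∀ j, (rowSupp Hhat j).card = 2)
    {S : Set I} (hS : S ∈ classesAvoiding Hhat (rowSupp H (Fin.last m))) :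
    minPW wMaxFrac H ≤ ((S.ncard : ℕ) : ℝ) := by
  obtain ⟨⟨a, rfl⟩, hS⟩ := hS
  exact (isStoppingSet_of_chainClosed hsupp hrows
    (fun _ _ hcd hc => mem_chainClass_of_chainRel hc hcd)
    fun k hk hkS => (hS ⟨k, hkS, hk⟩).elim).minPW_wMaxFrac_le ⟨a, mem_chainClass_self a⟩

theorem exists_ncard_le_wMaxFrac
    (hsupp : ∀ j, rowSupp Hhat j = rowSupp H j.castSucc)
    (hlast : ∀ i ∈ rowSupp H (Fin.last m), ∀ i' ∈ rowSupp H (Fin.last m),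
      chainRel Hhat i i' → i = i')
    {x : I → ℝ} (hx : x ∈ fundCone H) (hx0 : x ≠ 0) :
    (∃ S ∈ classesMeeting Hhat (rowSupp H (Fin.last m)),
      ∃ T ∈ classesMeeting Hhat (rowSupp H (Fin.last m)),
        S ≠ T ∧ ((S.ncard + T.ncard : ℕ) : ℝ) ≤ wMaxFrac x) ∨
    ∃ S ∈ classesAvoiding Hhat (rowSupp H (Fin.last m)),
      ((S.ncard : ℕ) : ℝ) ≤ wMaxFrac x := by
  have hconst : ∀ a b, chainRel Hhat a b → x a = x b := fun _ _ => eq_of_chainRel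
    fun _ _ ⟨j, hj⟩ => eq_of_mem_fundCone_of_rowSupp_eq_pair hx ((hsupp j).symm.trans hj)
  obtain ⟨i, hi⟩ := Function.ne_iff.1 hx0
  have : Nonempty I := ⟨i⟩
  obtain ⟨i₀, hi₀⟩ := Finite.exists_max x
  have hpos : 0 < x i₀ := (lt_of_le_of_ne (hx.1 i) (Ne.symm hi)).trans_le (hi₀ i)
  rw [wMaxFrac_eq_of_le hi₀]
  by_cases hmeet : ∃ ℓ ∈ chainClass Hhat i₀, ℓ ∈ rowSupp H (Fin.last m)
  · obtain ⟨ℓ, hℓS, hℓ⟩ := hmeet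
    rw [hconst _ _ hℓS] at hpos ⊢
    obtain ⟨t, ht, hle⟩ := exists_ncard_add_ncard_mul_le_sum chainRel_equivalence hx.1 hconst
      (fun a ha b hb hab hr => hab (hlast a ha b hb hr)) hℓ hpos (hx.2 _ ℓ hℓ)
    obtain ⟨htℓ, ht⟩ := Finset.mem_erase.1 ht
    have hℓt : chainClass Hhat ℓ ≠ chainClass Hhat t := fun h =>
      htℓ (hlast ℓ hℓ t ht (chainClass_eq_iff.1 h)).symm
    exact .inl ⟨_, ⟨⟨ℓ, rfl⟩, ℓ, mem_chainClass_self ℓ, hℓ⟩, _,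
      ⟨⟨t, rfl⟩, t, mem_chainClass_self t, ht⟩, hℓt, (le_div_iff₀ hpos).2 hle⟩
  · refine .inr ⟨_, ⟨⟨i₀, rfl⟩, hmeet⟩, (le_div_iff₀ hpos).2 ?_⟩
    simpa [chainClass] using
      sum_ncard_mul_le_sum chainRel_equivalence hx.1 hconst (K := {i₀}) (by simp)

end LastRow

theorem statement8_general {m n : ℕ} (H : Matrix (Fin (m + 1)) (Fin n) (ZMod 2))
    (Hhat : Matrix (Fin m) (Fin n) (ZMod 2))
    (hHhat : Hhat = Matrix.of fun j i => H j.castSucc i)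
    (hrows : ∀ j, (rowSupp Hhat j).card = 2)
    (hlast : ∀ i ∈ rowSupp H (Fin.last m), ∀ i' ∈ rowSupp H (Fin.last m),
      chainRel Hhat i i' → i = i')
    (S' S'' : Set (Set (Fin n)))
    (hS' : S' = {S | (∃ i, S = {i' | chainRel Hhat i i'}) ∧
      ∃ i ∈ S, i ∈ rowSupp H (Fin.last m)})
    (hS'' : S'' = {S | (∃ i, S = {i' | chainRel Hhat i i'}) ∧
      ¬∃ i ∈ S, i ∈ rowSupp H (Fin.last m)}) :
    minPW wMaxFrac H = min
      (sInf {x : EReal | ∃ S ∈ S', ∃ T ∈ S', S ≠ T ∧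
        x = (((S.ncard + T.ncard : ℕ) : ℝ) : EReal)})
      (sInf {x : EReal | ∃ S ∈ S'', x = (((S.ncard : ℕ) : ℝ) : EReal)}) := by
  have hsupp : ∀ j, rowSupp Hhat j = rowSupp H j.castSucc := fun _ => by subst hHhat; rfl
  subst hS' hS''
  refine le_antisymm (le_min (le_sInf ?_) (le_sInf ?_)) (le_sInf ?_)
  · rintro _ ⟨S, hS, T, hT, hST, rfl⟩
    exact minPW_wMaxFrac_le_ncard_add_ncard hsupp hrows hlast hS hT hST
  · rintro _ ⟨S, hS, rfl⟩
    exact minPW_wMaxFrac_le_ncard_of_mem_classesAvoiding hsupp hrows hS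
  · rintro _ ⟨x, ⟨hx, hx0⟩, rfl⟩
    rcases exists_ncard_le_wMaxFrac hsupp hlast hx hx0 with
      ⟨S, hS, T, hT, hST, hle⟩ | ⟨S, hS, hle⟩
    · exact min_le_of_left_le <|
        sInf_le_of_le ⟨S, hS, T, hT, hST, rfl⟩ (EReal.coe_le_coe_iff.2 hle)
    · exact min_le_of_right_le <| sInf_le_of_le ⟨S, hS, rfl⟩ (EReal.coe_le_coe_iff.2 hle)

/-- Let `H` be a binary matrix whose first rows (all but the last) have Hamming
weight exactly 2; let `Ĥ` consist of these rows, `R` its associated chain equivalence relation,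
and `𝒮` its set of equivalence classes.  Assume the support `I_m` of the last row meets each
class in at most one element, and let `𝒮'` be the classes meeting `I_m` and `𝒮''` the others.
If `|𝒮'| ≥ 2` or `𝒮'' ≠ ∅`, then
`w_maxfrac^min(H) = min( min_{S ≠ T ∈ 𝒮'} (|S|+|T|), min_{S ∈ 𝒮''} |S| )`,
where the minimum of an empty set is `+∞`. -/
theorem statement8 {m n : ℕ} (H : Matrix (Fin (m + 1)) (Fin n) (ZMod 2))
    (Hhat : Matrix (Fin m) (Fin n) (ZMod 2))
    (hHhat : Hhat = Matrix.of fun j i => H j.castSucc i)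
    (hrows : ∀ j, (rowSupp Hhat j).card = 2)
    (hlast : ∀ i ∈ rowSupp H (Fin.last m), ∀ i' ∈ rowSupp H (Fin.last m),
      chainRel Hhat i i' → i = i')
    (S' S'' : Set (Set (Fin n)))
    (hS' : S' = {S | (∃ i, S = {i' | chainRel Hhat i i'}) ∧
      ∃ i ∈ S, i ∈ rowSupp H (Fin.last m)})
    (hS'' : S'' = {S | (∃ i, S = {i' | chainRel Hhat i i'}) ∧
      ¬∃ i ∈ S, i ∈ rowSupp H (Fin.last m)})
    (hne : 2 ≤ S'.ncard ∨ S''.Nonempty) :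
    minPW wMaxFrac H = min
      (sInf {x : EReal | ∃ S ∈ S', ∃ T ∈ S', S ≠ T ∧
        x = (((S.ncard + T.ncard : ℕ) : ℝ) : EReal)})
      (sInf {x : EReal | ∃ S ∈ S'', x = (((S.ncard : ℕ) : ℝ) : EReal)}) :=
  statement8_general H Hhat hHhat hrows hlast S' S'' hS' hS''
end

section
/- Let H ∈ 𝔽₂^{m×n} be a (w_c,w_r)-regular matrix whose Tanner graph is connected, and let μ₁ and μ₂ denote the largest and second largest eigenvalues of the real matrix L = HᵀH (H viewed as a 0-1 matrix over ℝ). Then μ₂ < μ₁, and every nonzero pseudocodeword x ∈ K(H) satisfies w_AWGNC(x) ≥ n·(2w_c − μ₂)/(μ₁ − μ₂); in particular w_AWGNC^min(H) ≥ n·(2w_c − μ₂)/(μ₁ − μ₂). -/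
open Matrix BigOperators Finset

/-!
The matrix `L = AᵀA` (with `A` the 0-1 matrix of `H`) is symmetric with nonnegative entries and
constant row sums `w_c w_r`, and two columns sharing a row give a positive entry. Gershgorin
bounds every eigenvalue by `w_c w_r`, the all-ones vector attains it, and connectivity of the
Tanner graph forces every `w_c w_r`-eigenvector to be constant (a maximum principle), so
`μ₁ = w_c w_r` is simple with eigenvector `𝟙/√n`. Expanding `x` in an orthonormal eigenbasis gives
`xᵀLx ≤ μ₂‖x‖² + (μ₁ - μ₂)(∑ xᵢ)²/n`, while the cone inequalities give
`(∑_{i ∈ I_j} xᵢ)² ≥ 2 ∑_{i ∈ I_j} xᵢ²` for every row, hence `xᵀLx ≥ 2 w_c ‖x‖²`. Together,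
`n (2 w_c - μ₂) ‖x‖² ≤ (μ₁ - μ₂) (∑ xᵢ)²`.
-/

section Constant

variable {n : Type*} [Fintype n] {u : n → ℝ}

lemma dotProduct_eq_of_const (hu : ∀ k k', u k = u k') (w : n → ℝ) (k : n) :
    u ⬝ᵥ w = u k * ∑ l, w l := by
  simp only [dotProduct, Finset.mul_sum, hu _ k]

lemma sq_dotProduct_of_const (hu : ∀ k k', u k = u k') (hu1 : u ⬝ᵥ u = 1) (x : n → ℝ) :
    (u ⬝ᵥ x) ^ 2 = (∑ l, x l) ^ 2 / Fintype.card n := by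
  obtain ⟨k, -, -⟩ := Finset.exists_ne_zero_of_sum_ne_zero (hu1.trans_ne one_ne_zero)
  have hcard : (Fintype.card n : ℝ) * u k ^ 2 = 1 := by
    rw [← hu1, dotProduct_eq_of_const hu u k]
    simp only [hu _ k, Finset.sum_const, Finset.card_univ, nsmul_eq_mul]
    ring
  have hpos : (Fintype.card n : ℝ) ≠ 0 := left_ne_zero_of_mul_eq_one hcard
  rw [dotProduct_eq_of_const hu x k, eq_div_iff hpos]
  linear_combination (∑ l, x l) ^ 2 * hcard

end Constant

namespace Matrix.IsHermitian

variable {n : Type*} [Fintype n] [DecidableEq n] {A : Matrix n n ℝ} (hA : A.IsHermitian)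

lemma sum_dotProduct_smul_eigenvectorBasis (x : n → ℝ) :
    ∑ i, (⇑(hA.eigenvectorBasis i) ⬝ᵥ x) • ⇑(hA.eigenvectorBasis i) = x := by
  have := congrArg WithLp.ofLp (hA.eigenvectorBasis.sum_repr' (WithLp.toLp 2 x))
  simpa [EuclideanSpace.inner_eq_star_dotProduct, dotProduct_comm] using this

lemma sum_sq_dotProduct_eigenvectorBasis (x : n → ℝ) :
    ∑ i, (⇑(hA.eigenvectorBasis i) ⬝ᵥ x) ^ 2 = x ⬝ᵥ x := by
  calc ∑ i, (⇑(hA.eigenvectorBasis i) ⬝ᵥ x) ^ 2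
      = (∑ i, (⇑(hA.eigenvectorBasis i) ⬝ᵥ x) • ⇑(hA.eigenvectorBasis i)) ⬝ᵥ x := by
        simp only [sum_dotProduct, smul_dotProduct, smul_eq_mul, sq]
    _ = x ⬝ᵥ x := by rw [hA.sum_dotProduct_smul_eigenvectorBasis]

lemma dotProduct_mulVec_eq_sum (x : n → ℝ) :
    x ⬝ᵥ A *ᵥ x = ∑ i, hA.eigenvalues i * (⇑(hA.eigenvectorBasis i) ⬝ᵥ x) ^ 2 := by
  calc x ⬝ᵥ A *ᵥ x
      = x ⬝ᵥ A *ᵥ ∑ i, (⇑(hA.eigenvectorBasis i) ⬝ᵥ x) • ⇑(hA.eigenvectorBasis i) := by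
        rw [hA.sum_dotProduct_smul_eigenvectorBasis]
    _ = _ := by
        simp only [mulVec_sum, mulVec_smul, mulVec_eigenvectorBasis, dotProduct_sum,
          dotProduct_smul, smul_eq_mul]
        exact Finset.sum_congr rfl fun i _ => by rw [dotProduct_comm x]; ring

lemma eigenvectorBasis_dotProduct (i j : n) :
    ⇑(hA.eigenvectorBasis i) ⬝ᵥ ⇑(hA.eigenvectorBasis j) = if i = j then 1 else 0 := by
  have := (orthonormal_iff_ite.mp hA.eigenvectorBasis.orthonormal) j i
  simpa [EuclideanSpace.inner_eq_star_dotProduct, eq_comm] using this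

lemma eq_of_eigenvectorBasis_const {i j : n}
    (hi : ∀ k k', hA.eigenvectorBasis i k = hA.eigenvectorBasis i k')
    (hj : ∀ k k', hA.eigenvectorBasis j k = hA.eigenvectorBasis j k') : i = j := by
  by_contra hij
  have h0 := sq_dotProduct_of_const hi (by simpa using hA.eigenvectorBasis_dotProduct i i)
    (hA.eigenvectorBasis j)
  have h1 := sq_dotProduct_of_const hj (by simpa using hA.eigenvectorBasis_dotProduct j j)
    (hA.eigenvectorBasis j)
  rw [hA.eigenvectorBasis_dotProduct, if_neg hij] at h0
  rw [hA.eigenvectorBasis_dotProduct, if_pos rfl] at h1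
  linarith

lemma dotProduct_mulVec_le_of_eigenvalues_le {i₁ : n} {μ : ℝ}
    (h : ∀ i ≠ i₁, hA.eigenvalues i ≤ μ) (x : n → ℝ) :
    x ⬝ᵥ A *ᵥ x ≤
      μ * (x ⬝ᵥ x) + (hA.eigenvalues i₁ - μ) * (⇑(hA.eigenvectorBasis i₁) ⬝ᵥ x) ^ 2 := by
  rw [hA.dotProduct_mulVec_eq_sum, ← hA.sum_sq_dotProduct_eigenvectorBasis,
    ← Finset.add_sum_erase _ _ (Finset.mem_univ i₁),
    ← Finset.add_sum_erase _ _ (Finset.mem_univ i₁), mul_add, Finset.mul_sum]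
  have hrest : ∑ i ∈ Finset.univ.erase i₁, hA.eigenvalues i * (⇑(hA.eigenvectorBasis i) ⬝ᵥ x) ^ 2 ≤
      ∑ i ∈ Finset.univ.erase i₁, μ * (⇑(hA.eigenvectorBasis i) ⬝ᵥ x) ^ 2 :=
    Finset.sum_le_sum fun i hi =>
      mul_le_mul_of_nonneg_right (h i (Finset.ne_of_mem_erase hi)) (sq_nonneg _)
  linarith

end Matrix.IsHermitian

section NonnegRowSum

variable {n : Type*} [Fintype n] {B : Matrix n n ℝ} {d : ℝ}

lemma eigenvalue_le_of_nonneg_of_mulVec_one [DecidableEq n] (hB : ∀ i j, 0 ≤ B i j)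
    (hrow : B *ᵥ 1 = d • 1) {μ : ℝ} {v : n → ℝ} (hv : B *ᵥ v = μ • v) (hv0 : v ≠ 0) : μ ≤ d := by
  have hμ : Module.End.HasEigenvalue (toLin' B) μ :=
    Module.End.hasEigenvalue_of_hasEigenvector
      ⟨Module.End.mem_eigenspace_iff.mpr (by rwa [toLin'_apply]), hv0⟩
  obtain ⟨k, hk⟩ := eigenvalue_mem_ball hμ
  have hsum : ∑ j, B k j = d := by simpa [mulVec, dotProduct] using congrFun hrow k
  rw [Metric.mem_closedBall, Real.dist_eq] at hk
  simp only [Real.norm_eq_abs, abs_of_nonneg (hB k _)] at hk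
  rw [← Finset.add_sum_erase _ _ (Finset.mem_univ k)] at hsum
  linarith [le_abs_self (μ - B k k)]

lemma eq_of_mulVec_eq_smul_of_reflTransGen (hB : ∀ i j, 0 ≤ B i j) (hrow : B *ᵥ 1 = d • 1)
    (hconn : ∀ i k, Relation.ReflTransGen (fun a b => 0 < B a b) i k)
    {v : n → ℝ} (hv : B *ᵥ v = d • v) (i i' : n) : v i = v i' := by
  obtain ⟨i₀, -, hmax⟩ := Finset.exists_max_image Finset.univ v ⟨i, Finset.mem_univ i⟩
  -- `w := v i₀ - v` is a nonnegative `d`-eigenvector, and its zero set is closed under edges.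
  set w : n → ℝ := v i₀ • 1 - v with hw
  have hw0 : ∀ k, 0 ≤ w k := fun k => by simpa [hw] using hmax k (Finset.mem_univ k)
  have hBw : B *ᵥ w = d • w := by
    rw [hw, mulVec_sub, mulVec_smul, hrow, hv, smul_comm, smul_sub]
  have hstep : ∀ b c, w b = 0 → 0 < B b c → w c = 0 := by
    intro b c hb hbc
    have hzero : ∑ k, B b k * w k = 0 := by
      simpa [mulVec, dotProduct, hb] using congrFun hBw b
    have := (Finset.sum_eq_zero_iff_of_nonneg fun k _ => mul_nonneg (hB b k) (hw0 k)).mp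
      hzero c (Finset.mem_univ c)
    exact (mul_eq_zero.mp this).resolve_left hbc.ne'
  have hzero : ∀ k, w k = 0 := fun k => by
    induction hconn i₀ k with
    | refl => simp [hw]
    | tail _ hbc ih => exact hstep _ _ ih hbc
  have h := hzero i
  have h' := hzero i'
  simp only [hw, Pi.sub_apply, Pi.smul_apply, Pi.one_apply, smul_eq_mul, mul_one] at h h'
  linarith

end NonnegRowSum

lemma Matrix.IsHermitian.exists_simple_eigenvalue_of_nonneg_of_mulVec_one {n : Type*} [Fintype n]
    [DecidableEq n] [Nonempty n] {B : Matrix n n ℝ} {d : ℝ} (hB : B.IsHermitian)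
    (hB0 : ∀ i j, 0 ≤ B i j) (hrow : B *ᵥ 1 = d • 1)
    (hconn : ∀ i k, Relation.ReflTransGen (fun a b => 0 < B a b) i k) :
    ∃ i₁, hB.eigenvalues i₁ = d ∧
      (∀ k k', hB.eigenvectorBasis i₁ k = hB.eigenvectorBasis i₁ k') ∧
      ∀ i ≠ i₁, hB.eigenvalues i < d := by
  have hle (i : n) : hB.eigenvalues i ≤ d := by
    refine eigenvalue_le_of_nonneg_of_mulVec_one hB0 hrow (hB.mulVec_eigenvectorBasis i)
      fun h => ?_
    simpa [h] using hB.eigenvectorBasis_dotProduct i i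
  have hconst (i : n) (hi : hB.eigenvalues i = d) (k k' : n) :
      hB.eigenvectorBasis i k = hB.eigenvectorBasis i k' :=
    eq_of_mulVec_eq_smul_of_reflTransGen hB0 hrow hconn (hi ▸ hB.mulVec_eigenvectorBasis i) k k'
  obtain ⟨i₁, hi₁⟩ : d ∈ Set.range hB.eigenvalues := by
    rw [← hB.spectrum_real_eq_range_eigenvalues, ← spectrum_toLin']
    refine (Module.End.hasEigenvalue_of_hasEigenvector ⟨?_, one_ne_zero⟩).mem_spectrum
    rwa [Module.End.mem_eigenspace_iff, toLin'_apply]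
  exact ⟨i₁, hi₁, hconst i₁ hi₁, fun i hi => (hle i).lt_of_ne fun h =>
    hi (hB.eq_of_eigenvectorBasis_const (hconst i h) (hconst i₁ hi₁))⟩

lemma top_eq_and_second_lt_of_unique_argmax {ι : Type*} [Fintype ι] [DecidableEq ι] {f : ι → ℝ}
    {i₁ : ι} (hf : ∀ i ≠ i₁, f i < f i₁) {μ₁ μ₂ : ℝ}
    (h₁ : μ₁ ∈ Finset.univ.val.map f ∧ ∀ x ∈ Finset.univ.val.map f, x ≤ μ₁)
    (h₂ : μ₂ ∈ (Finset.univ.val.map f).erase μ₁ ∧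
      ∀ x ∈ (Finset.univ.val.map f).erase μ₁, x ≤ μ₂) :
    μ₁ = f i₁ ∧ μ₂ < μ₁ ∧ ∀ i ≠ i₁, f i ≤ μ₂ := by
  obtain ⟨i, -, rfl⟩ := Multiset.mem_map.mp h₁.1
  obtain rfl : i = i₁ := by
    by_contra hi
    exact (hf i hi).not_ge (h₁.2 _ (Multiset.mem_map_of_mem f (Finset.mem_univ_val i₁)))
  have huniv : Finset.univ.val.map f = f i ::ₘ (Finset.univ.erase i).val.map f := by
    rw [← Multiset.map_cons, Finset.erase_val, Multiset.cons_erase (Finset.mem_univ_val i)]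
  rw [huniv, Multiset.erase_cons_head] at h₂
  obtain ⟨i₂, hi₂, rfl⟩ := Multiset.mem_map.mp h₂.1
  exact ⟨rfl, hf i₂ (Finset.ne_of_mem_erase hi₂), fun i' hi' =>
    h₂.2 _ (Multiset.mem_map_of_mem f (Finset.mem_erase.mpr ⟨hi', Finset.mem_univ i'⟩))⟩

lemma two_mul_sum_sq_le_sq_sum {ι : Type*} [DecidableEq ι] {s : Finset ι} {x : ι → ℝ}
    (hx0 : ∀ i ∈ s, 0 ≤ x i) (hx : ∀ ℓ ∈ s, x ℓ ≤ ∑ i ∈ s.erase ℓ, x i) :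
    2 * ∑ i ∈ s, x i ^ 2 ≤ (∑ i ∈ s, x i) ^ 2 := by
  have h2 (ℓ : ι) (hℓ : ℓ ∈ s) : 2 * x ℓ ≤ ∑ i ∈ s, x i := by
    linarith [hx ℓ hℓ, Finset.add_sum_erase s x hℓ]
  calc 2 * ∑ i ∈ s, x i ^ 2 = ∑ i ∈ s, (2 * x i) * x i := by
        rw [Finset.mul_sum]; exact Finset.sum_congr rfl fun i _ => by ring
    _ ≤ ∑ i ∈ s, (∑ i ∈ s, x i) * x i :=
        Finset.sum_le_sum fun i hi => mul_le_mul_of_nonneg_right (h2 i hi) (hx0 i hi)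
    _ = (∑ i ∈ s, x i) ^ 2 := by rw [← Finset.mul_sum, sq]

section TannerGraph

variable {J I : Type*} (H : Matrix J I (ZMod 2))

lemma toRealMatrix_nonneg (j : J) (i : I) : 0 ≤ toRealMatrix H j i := by
  rw [toRealMatrix, of_apply]
  split_ifs <;> norm_num

lemma transpose_mul_self_nonneg [Fintype J] (a b : I) :
    0 ≤ ((toRealMatrix H)ᵀ * toRealMatrix H) a b :=
  Finset.sum_nonneg fun j _ => mul_nonneg (toRealMatrix_nonneg H j a) (toRealMatrix_nonneg H j b)

lemma toRealMatrix_mulVec [Fintype I] (x : I → ℝ) (j : J) :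
    (toRealMatrix H *ᵥ x) j = ∑ i ∈ rowSupp H j, x i := by
  simp [mulVec, dotProduct, toRealMatrix, rowSupp, Finset.sum_filter]

lemma toRealMatrix_mulVec_one [Fintype I] {wr : ℕ} (hrow : ∀ j, (rowSupp H j).card = wr) :
    toRealMatrix H *ᵥ 1 = (wr : ℝ) • 1 := by
  ext j
  simp [toRealMatrix_mulVec, hrow]

lemma one_vecMul_toRealMatrix [Fintype J] {wc : ℕ}
    (hcol : ∀ i, (Finset.univ.filter fun j => H j i = 1).card = wc) :
    1 ᵥ* toRealMatrix H = (wc : ℝ) • 1 := by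
  ext i
  simp [vecMul, dotProduct, toRealMatrix, Finset.sum_boole, hcol]

lemma transpose_mul_self_mulVec_one [Fintype J] [Fintype I] {wc wr : ℕ}
    (hcol : ∀ i, (Finset.univ.filter fun j => H j i = 1).card = wc)
    (hrow : ∀ j, (rowSupp H j).card = wr) :
    ((toRealMatrix H)ᵀ * toRealMatrix H) *ᵥ 1 = ((wc : ℝ) * wr) • 1 := by
  rw [← mulVec_mulVec, toRealMatrix_mulVec_one H hrow, mulVec_smul, mulVec_transpose,
    one_vecMul_toRealMatrix H hcol, smul_smul, mul_comm]

lemma transpose_mul_self_apply_pos [Fintype J] [Fintype I] {j : J} {a b : I}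
    (ha : a ∈ rowSupp H j) (hb : b ∈ rowSupp H j) :
    0 < ((toRealMatrix H)ᵀ * toRealMatrix H) a b := by
  have hA (i : I) (hi : i ∈ rowSupp H j) : toRealMatrix H j i = 1 := by
    simp_all [toRealMatrix, rowSupp]
  rw [mul_apply]
  refine lt_of_lt_of_le ?_ (Finset.single_le_sum (fun j' _ =>
    mul_nonneg (toRealMatrix_nonneg H j' a) (toRealMatrix_nonneg H j' b))
    (Finset.mem_univ j))
  simp [hA a ha, hA b hb]

lemma dotProduct_transpose_mul_self_mulVec [Fintype J] [Fintype I] (x : I → ℝ) :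
    x ⬝ᵥ ((toRealMatrix H)ᵀ * toRealMatrix H) *ᵥ x = ∑ j, (∑ i ∈ rowSupp H j, x i) ^ 2 := by
  rw [← mulVec_mulVec, dotProduct_mulVec, vecMul_transpose, dotProduct]
  simp only [toRealMatrix_mulVec, sq]

lemma two_mul_dotProduct_le_of_mem_fundCone [Fintype J] [Fintype I] [DecidableEq I] {wc : ℕ}
    (hcol : ∀ i, (Finset.univ.filter fun j => H j i = 1).card = wc) {x : I → ℝ}
    (hx : x ∈ fundCone H) :
    2 * wc * (x ⬝ᵥ x) ≤ x ⬝ᵥ ((toRealMatrix H)ᵀ * toRealMatrix H) *ᵥ x := by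
  have hcount : ∑ j, ∑ i ∈ rowSupp H j, x i ^ 2 = wc * (x ⬝ᵥ x) := by
    calc ∑ j, ∑ i ∈ rowSupp H j, x i ^ 2 = 1 ⬝ᵥ toRealMatrix H *ᵥ (x ^ 2) := by
          simp [dotProduct, toRealMatrix_mulVec]
      _ = wc * (x ⬝ᵥ x) := by
          rw [dotProduct_mulVec, one_vecMul_toRealMatrix H hcol, smul_dotProduct, one_dotProduct]
          simp [dotProduct, sq]
  rw [dotProduct_transpose_mul_self_mulVec, mul_assoc, ← hcount, Finset.mul_sum]
  exact Finset.sum_le_sum fun j _ =>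
    two_mul_sum_sq_le_sq_sum (fun i _ => hx.1 i) (hx.2 j)

end TannerGraph

section TannerConnectivity

variable {J I : Type*} [Fintype I] {H : Matrix J I (ZMod 2)}

def tannerColumns (H : Matrix J I (ZMod 2)) : J ⊕ I → Finset I
  | Sum.inl j => rowSupp H j
  | Sum.inr i => {i}

variable {R : I → I → Prop} (hR : ∀ j, ∀ a ∈ rowSupp H j, ∀ b ∈ rowSupp H j, R a b)
include hR

lemma reflTransGen_of_mem_tannerColumns {u : J ⊕ I} {a b : I} (ha : a ∈ tannerColumns H u)
    (hb : b ∈ tannerColumns H u) : Relation.ReflTransGen R a b := by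
  cases u with
  | inl j => exact .single (hR j a ha b hb)
  | inr i =>
    rw [tannerColumns, Finset.mem_singleton] at ha hb
    rw [ha, hb]

lemma SimpleGraph.Walk.reflTransGen_of_tannerGraph {u v : J ⊕ I}
    (p : (tannerGraph H).Walk u v) :
    ∀ a ∈ tannerColumns H u, ∀ b ∈ tannerColumns H v, Relation.ReflTransGen R a b := by
  induction p with
  | nil => exact fun a ha b hb => reflTransGen_of_mem_tannerColumns hR ha hb
  | @cons u w v huw p ih =>
    intro a ha b hb
    obtain ⟨t, htu, htw⟩ : ∃ t, t ∈ tannerColumns H u ∧ t ∈ tannerColumns H w := by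
      rw [tannerGraph, SimpleGraph.fromRel_adj] at huw
      rcases huw.2 with ⟨j, i, rfl, rfl, hji⟩ | ⟨j, i, rfl, rfl, hji⟩ <;>
        exact ⟨i, by simp [tannerColumns, rowSupp, hji]⟩
    exact (reflTransGen_of_mem_tannerColumns hR ha htu).trans (ih t htw b hb)

lemma SimpleGraph.Connected.reflTransGen_of_tannerGraph (hconn : (tannerGraph H).Connected)
    (a b : I) : Relation.ReflTransGen R a b :=
  (hconn.preconnected (.inr a) (.inr b)).some.reflTransGen_of_tannerGraph hR a
    (Finset.mem_singleton_self a) b (Finset.mem_singleton_self b)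

end TannerConnectivity

lemma le_wAWGNC_of_mul_dotProduct_le {I : Type*} [Fintype I] {x : I → ℝ} (hx : x ≠ 0)
    {a δ N : ℝ} (hδ : 0 < δ) (hN : 0 < N) (h : a * (x ⬝ᵥ x) ≤ δ * ((∑ i, x i) ^ 2 / N)) :
    N * a / δ ≤ wAWGNC x := by
  have hxx : 0 < x ⬝ᵥ x := by
    obtain ⟨i, hi⟩ := Function.ne_iff.mp hx
    exact lt_of_lt_of_le (mul_self_pos.mpr hi)
      (Finset.single_le_sum (fun j _ => mul_self_nonneg (x j)) (Finset.mem_univ i))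
  have hsq : ∑ i, x i ^ 2 = x ⬝ᵥ x := by simp [dotProduct, sq]
  rw [wAWGNC, hsq, div_le_div_iff₀ hδ hxx]
  rw [mul_div_assoc', le_div_iff₀ hN] at h
  nlinarith

/-- eigenvalue bound of Vontobel and Koetter: Let `H` be a
`(w_c, w_r)`-regular binary matrix with connected Tanner graph, and let `μ₁` and `μ₂` be the
largest and second largest eigenvalues (with multiplicity) of the real matrix `L = HᵀH`.
Then `μ₂ < μ₁`, every nonzero pseudocodeword `x ∈ K(H)` satisfies
`w_AWGNC(x) ≥ n (2 w_c - μ₂) / (μ₁ - μ₂)`, and in particular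
`w_AWGNC^min(H) ≥ n (2 w_c - μ₂) / (μ₁ - μ₂)`. -/
theorem statement10 {m n : ℕ} (H : Matrix (Fin m) (Fin n) (ZMod 2)) (wc wr : ℕ)
    (hcol : ∀ i, (Finset.univ.filter fun j => H j i = 1).card = wc)
    (hrow : ∀ j, (rowSupp H j).card = wr)
    (hconn : (tannerGraph H).Connected)
    (μ₁ μ₂ : ℝ)
    (hμ₁ : μ₁ ∈ eigMult ((toRealMatrix H)ᵀ * toRealMatrix H) ∧
      ∀ x ∈ eigMult ((toRealMatrix H)ᵀ * toRealMatrix H), x ≤ μ₁)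
    (hμ₂ : μ₂ ∈ (eigMult ((toRealMatrix H)ᵀ * toRealMatrix H)).erase μ₁ ∧
      ∀ x ∈ (eigMult ((toRealMatrix H)ᵀ * toRealMatrix H)).erase μ₁, x ≤ μ₂) :
    μ₂ < μ₁ ∧
    (∀ x ∈ fundCone H \ {0}, (n : ℝ) * (2 * (wc : ℝ) - μ₂) / (μ₁ - μ₂) ≤ wAWGNC x) ∧
    (((n : ℝ) * (2 * (wc : ℝ) - μ₂) / (μ₁ - μ₂) : ℝ) : EReal) ≤ minPW wAWGNC H := by
  have hL : ((toRealMatrix H)ᵀ * toRealMatrix H).IsHermitian :=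
    conjTranspose_eq_transpose_of_trivial (toRealMatrix H) ▸
      isHermitian_conjTranspose_mul_self (toRealMatrix H)
  have heig :
      eigMult ((toRealMatrix H)ᵀ * toRealMatrix H) = Finset.univ.val.map hL.eigenvalues := by
    rw [eigMult, hL.roots_charpoly_eq_eigenvalues]
    rfl
  rw [heig] at hμ₁ hμ₂
  have hn : Nonempty (Fin n) := by
    obtain ⟨i, -, -⟩ := Multiset.mem_map.mp hμ₁.1
    exact ⟨i⟩
  obtain ⟨i₁, hi₁, hconst, hlt⟩ := hL.exists_simple_eigenvalue_of_nonneg_of_mulVec_one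
    (transpose_mul_self_nonneg H)
    (transpose_mul_self_mulVec_one H hcol hrow)
    (hconn.reflTransGen_of_tannerGraph fun j a ha b hb => transpose_mul_self_apply_pos H ha hb)
  obtain ⟨rfl, hμ₂μ₁, hμ₂le⟩ :=
    top_eq_and_second_lt_of_unique_argmax (fun i hi => (hlt i hi).trans_eq hi₁.symm) hμ₁ hμ₂
  have hbound : ∀ x ∈ fundCone H \ {0},
      (n : ℝ) * (2 * (wc : ℝ) - μ₂) / (hL.eigenvalues i₁ - μ₂) ≤ wAWGNC x := by
    rintro x ⟨hxK, hx0⟩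
    have hquad := (two_mul_dotProduct_le_of_mem_fundCone H hcol hxK).trans
      (hL.dotProduct_mulVec_le_of_eigenvalues_le hμ₂le x)
    rw [sq_dotProduct_of_const hconst (by simpa using hL.eigenvectorBasis_dotProduct i₁ i₁),
      Fintype.card_fin] at hquad
    exact le_wAWGNC_of_mul_dotProduct_le hx0 (sub_pos.mpr hμ₂μ₁)
      (Nat.cast_pos.mpr (Fin.pos_iff_nonempty.mpr hn)) (by linarith)
  exact ⟨hμ₂μ₁, hbound, le_sInf fun _ ⟨x, hx, hy⟩ => hy ▸ EReal.coe_le_coe_iff.mpr (hbound x hx)⟩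
end
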